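/- arXiv:1606.02937 — 5 statements merged into one kernel-verified Lean document; each statement's English description precedes it below -/
import Mathlib

section
/- Let H be a complex inner product space, let A, B : H → H be linear maps that are symmetric (i.e., (Ax|y) = (x|Ay) and (Bx|y) = (x|By) for all x, y ∈ H), and let φ ∈ H satisfy Aφ ≠ 0 and Bφ ≠ 0. Define the commutator form value ([A,B]φ|φ) := (Bφ|Aφ) − (Aφ|Bφ). Then for each sign ε ∈ {+1, −1}: ε i ([A,B]φ|φ) = ‖Aφ‖‖Bφ‖ (2 − ‖ Aφ/‖Aφ‖ − ε i Bφ/‖Bφ‖ ‖²). -/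
open scoped InnerProductSpace

lemma stmt_9_aux (a b ε : ℝ) (z : ℂ) (ha : 0 < a) (hb : 0 < b) :
    (ε : ℂ) * Complex.I * (z - (starRingEnd ℂ) z) =
    ((a * b *
        (2 -
          ((a⁻¹ * a) ^ 2 - 2 * ((ε:ℂ) * Complex.I * (((b:ℂ))⁻¹ * (((a:ℂ))⁻¹ * z))).re +
            (1 * 1 * (b⁻¹ * b)) ^ 2)) : ℝ) : ℂ) := by
  rw [inv_mul_cancel₀ ha.ne', inv_mul_cancel₀ hb.ne']
  simp only [Complex.ext_iff, Complex.mul_re, Complex.mul_im, Complex.sub_re, Complex.sub_im,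
    Complex.ofReal_re, Complex.ofReal_im, Complex.I_re, Complex.I_im, Complex.conj_re,
    Complex.conj_im, Complex.inv_re, Complex.inv_im, Complex.normSq_ofReal]
  constructor <;> field_simp <;> ring_nf

/-- Uncertainty equality for the commutator form of two symmetric operators.
The scalar product `(x|y) := ⟪y, x⟫_ℂ` is linear in the first variable, so the
symmetry `(Ax|y) = (x|Ay)` reads `⟪y, A x⟫_ℂ = ⟪A y, x⟫_ℂ`, and the commutator form
`([A,B]φ|φ) = (Bφ|Aφ) − (Aφ|Bφ)` reads `⟪A φ, B φ⟫_ℂ - ⟪B φ, A φ⟫_ℂ`. -/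
theorem stmt_9 {H : Type*} [NormedAddCommGroup H] [InnerProductSpace ℂ H]
    (A B : H →ₗ[ℂ] H)
    (hA : ∀ x y : H, ⟪y, A x⟫_ℂ = ⟪A y, x⟫_ℂ)
    (hB : ∀ x y : H, ⟪y, B x⟫_ℂ = ⟪B y, x⟫_ℂ)
    (φ : H) (hAφ : A φ ≠ 0) (hBφ : B φ ≠ 0)
    (ε : ℝ) (hε : ε = 1 ∨ ε = -1) :
    (ε : ℂ) * Complex.I * (⟪A φ, B φ⟫_ℂ - ⟪B φ, A φ⟫_ℂ)
      = ((‖A φ‖ * ‖B φ‖ *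
          (2 - ‖(‖A φ‖ : ℂ)⁻¹ • A φ -
                ((ε : ℂ) * Complex.I) • ((‖B φ‖ : ℂ)⁻¹ • B φ)‖ ^ 2) : ℝ) : ℂ) := by
  have ha : (0:ℝ) < ‖A φ‖ := norm_pos_iff.mpr hAφ
  have hb : (0:ℝ) < ‖B φ‖ := norm_pos_iff.mpr hBφ
  have hz : ⟪B φ, A φ⟫_ℂ = (starRingEnd ℂ) ⟪A φ, B φ⟫_ℂ := (inner_conj_symm _ _).symm
  have hεa : |ε| = 1 := by rcases hε with h|h <;> simp [h]
  rw [@norm_sub_sq ℂ, hz]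
  simp only [inner_smul_left, inner_smul_right, norm_smul, map_mul, map_inv₀,
    Complex.conj_ofReal, Complex.conj_I, RCLike.re_to_complex, norm_mul, norm_inv,
    Complex.norm_real, Complex.norm_I, Real.norm_eq_abs, abs_of_pos ha, abs_of_pos hb,
    hεa, @inner_self_eq_norm_sq ℂ]
  exact stmt_9_aux _ _ _ _ ha hb
end

section
/- Let n ≥ 1 and let φ : ℝⁿ → ℂ be a Schwartz function. Then the following are equivalent: (i) n‖φ‖² = ‖xφ‖² + ‖∇φ‖²; (ii) xφ = −∇φ, i.e., xⱼφ(x) = −∂ⱼφ(x) for all x ∈ ℝⁿ and 1 ≤ j ≤ n; (iii) there exists θ ∈ ℝ such that φ(x) = e^{iθ} π^{−n/4} ‖φ‖ exp(−|x|²/2) for all x ∈ ℝⁿ. -/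
/-!
Integration by parts turns the commutation relation `[∂ⱼ, xⱼ] = 1` into
`2 Re ⟨xⱼφ, ∂ⱼφ⟩ = -‖φ‖²`, hence `‖(xⱼ + ∂ⱼ)φ‖² = ‖xⱼφ‖² + ‖∂ⱼφ‖² - ‖φ‖²`. Summing over `j`,
(i) says exactly that every `(xⱼ + ∂ⱼ)φ` vanishes, which is (ii). Under (ii) the function
`exp (|x|² / 2) φ` has zero derivative, so `φ` is a constant multiple of `exp (-|x|² / 2)`,
and the Gaussian integral `∫ exp (-|x|²) = π ^ (n / 2)` fixes the modulus of the constant.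
-/

open MeasureTheory
open scoped LineDeriv RealInnerProductSpace

namespace SchwartzMap

variable {D V : Type*} [NormedAddCommGroup D] [NormedSpace ℝ D]

section Leibniz

variable [NormedAddCommGroup V] [NormedSpace ℝ V]

theorem lineDerivOp_smulLeftCLM_clm (ℓ : D →L[ℝ] ℝ) (v : D) (φ : 𝓢(D, V)) :
    ∂_{v} (smulLeftCLM V ⇑ℓ φ) = ℓ v • φ + smulLeftCLM V ⇑ℓ (∂_{v} φ) := by
  ext x
  rw [lineDerivOp_apply_eq_fderiv, smulLeftCLM_apply ℓ.hasTemperateGrowth,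
    (ℓ.hasFDerivAt.fun_smul (φ.hasFDerivAt x)).fderiv]
  simp [lineDerivOp_apply_eq_fderiv, ℓ.hasTemperateGrowth, add_comm]

end Leibniz

section L2

variable [NormedAddCommGroup V] [InnerProductSpace ℝ V]
  [MeasurableSpace D] [BorelSpace D] [FiniteDimensional ℝ D] (μ : Measure D) [μ.IsAddHaarMeasure]

theorem real_inner_toLp_toLp (f g : 𝓢(D, V)) :
    ⟪f.toLp 2 μ, g.toLp 2 μ⟫ = ∫ x, ⟪f x, g x⟫ ∂μ := by
  rw [L2.inner_def]
  apply integral_congr_ae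
  filter_upwards [f.coeFn_toLp 2 μ, g.coeFn_toLp 2 μ] with x hf hg
  rw [hf, hg]

theorem norm_toLp_two_sq (f : 𝓢(D, V)) : ‖f.toLp 2 μ‖ ^ 2 = ∫ x, ‖f x‖ ^ 2 ∂μ := by
  simp only [← real_inner_self_eq_norm_sq, real_inner_toLp_toLp]

theorem toLp_add {p : ENNReal} [Fact (1 ≤ p)] (f g : 𝓢(D, V)) :
    (f + g).toLp p μ = f.toLp p μ + g.toLp p μ :=
  (toLpCLM ℝ V p μ).map_add f g

theorem toLp_smul {p : ENNReal} [Fact (1 ≤ p)] (c : ℝ) (f : 𝓢(D, V)) :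
    (c • f).toLp p μ = c • f.toLp p μ :=
  (toLpCLM ℝ V p μ).map_smul c f

theorem integral_norm_sq_eq_zero_iff (f : 𝓢(D, V)) : ∫ x, ‖f x‖ ^ 2 ∂μ = 0 ↔ f = 0 := by
  rw [← norm_toLp_two_sq, sq_eq_zero_iff, norm_eq_zero, ← (toLpCLM ℝ V 2 μ).map_zero]
  exact (injective_toLp 2 μ).eq_iff

theorem real_inner_toLp_smulLeftCLM {g : D → ℝ} (hg : g.HasTemperateGrowth) (f h : 𝓢(D, V)) :
    ⟪(smulLeftCLM V g f).toLp 2 μ, h.toLp 2 μ⟫ = ⟪f.toLp 2 μ, (smulLeftCLM V g h).toLp 2 μ⟫ := by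
  simp [real_inner_toLp_toLp, hg, real_inner_smul_left, real_inner_smul_right]

theorem real_inner_toLp_lineDerivOp (v : D) (f g : 𝓢(D, V)) :
    ⟪f.toLp 2 μ, (∂_{v} g).toLp 2 μ⟫ = -⟪(∂_{v} f).toLp 2 μ, g.toLp 2 μ⟫ := by
  simp only [real_inner_toLp_toLp]
  exact integral_bilinear_lineDerivOp_right_eq_neg_left f g (innerSL ℝ) v

theorem two_mul_real_inner_smulLeftCLM_lineDerivOp (ℓ : D →L[ℝ] ℝ) (v : D) (φ : 𝓢(D, V)) :
    2 * ⟪(smulLeftCLM V ⇑ℓ φ).toLp 2 μ, (∂_{v} φ).toLp 2 μ⟫ = -(ℓ v * ‖φ.toLp 2 μ‖ ^ 2) := by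
  have h := real_inner_toLp_lineDerivOp μ v (smulLeftCLM V ⇑ℓ φ) φ
  rw [lineDerivOp_smulLeftCLM_clm, toLp_add, inner_add_left, toLp_smul, real_inner_smul_left,
    real_inner_self_eq_norm_sq, real_inner_toLp_smulLeftCLM μ ℓ.hasTemperateGrowth (∂_{v} φ)] at h
  linarith [real_inner_comm ((smulLeftCLM V ⇑ℓ φ).toLp 2 μ) ((∂_{v} φ).toLp 2 μ)]

theorem integral_norm_sq_smulLeftCLM_add_lineDerivOp (ℓ : D →L[ℝ] ℝ) (v : D) (φ : 𝓢(D, V)) :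
    ∫ x, ‖(smulLeftCLM V ⇑ℓ φ + ∂_{v} φ) x‖ ^ 2 ∂μ =
      ∫ x, ‖ℓ x • φ x‖ ^ 2 ∂μ + ∫ x, ‖∂_{v} φ x‖ ^ 2 ∂μ - ℓ v * ∫ x, ‖φ x‖ ^ 2 ∂μ := by
  have hX : ∫ x, ‖ℓ x • φ x‖ ^ 2 ∂μ = ‖(smulLeftCLM V ⇑ℓ φ).toLp 2 μ‖ ^ 2 := by
    simp [norm_toLp_two_sq, ℓ.hasTemperateGrowth]
  rw [hX, ← norm_toLp_two_sq, ← norm_toLp_two_sq, ← norm_toLp_two_sq, toLp_add, norm_add_sq_real]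
  linarith [two_mul_real_inner_smulLeftCLM_lineDerivOp μ ℓ v φ]

end L2

end SchwartzMap

section Gaussian

variable {D F : Type*} [NormedAddCommGroup D] [InnerProductSpace ℝ D]
  [NormedAddCommGroup F] [NormedSpace ℝ F]

theorem hasFDerivAt_exp_mul_norm_sq (a : ℝ) (x : D) :
    HasFDerivAt (fun y : D ↦ Real.exp (a * ‖y‖ ^ 2))
      ((2 * a * Real.exp (a * ‖x‖ ^ 2)) • innerSL ℝ x) x := by
  convert ((hasStrictFDerivAt_norm_sq x).hasFDerivAt.const_mul a).exp using 1
  ext v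
  simp only [FunLike.coe_smul, Pi.smul_apply, smul_eq_mul]
  ring

theorem hasFDerivAt_exp_neg_norm_sq_div_two_smul (c : F) (x : D) :
    HasFDerivAt (fun y : D ↦ Real.exp (-‖y‖ ^ 2 / 2) • c)
      (-(innerSL ℝ x).smulRight (Real.exp (-‖x‖ ^ 2 / 2) • c)) x := by
  have h := (hasFDerivAt_exp_mul_norm_sq (-1 / 2) x).smul_const c
  convert h using 1
  · ext y
    ring_nf
  · ext v
    simp [smul_smul]
    ring_nf
    rw [neg_smul]

theorem eq_exp_neg_norm_sq_div_two_smul_of_hasFDerivAt {f : D → F}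
    (hf : ∀ x, HasFDerivAt f (-(innerSL ℝ x).smulRight (f x)) x) (x : D) :
    f x = Real.exp (-‖x‖ ^ 2 / 2) • f 0 := by
  have hg : ∀ y, HasFDerivAt (fun y ↦ Real.exp (1 / 2 * ‖y‖ ^ 2) • f y) (0 : D →L[ℝ] F) y := by
    intro y
    convert (hasFDerivAt_exp_mul_norm_sq (1 / 2) y).fun_smul (hf y) using 1
    ext v
    simp [smul_smul]
  have hconst := is_const_of_fderiv_eq_zero (fun y ↦ (hg y).differentiableAt)
    (fun y ↦ (hg y).fderiv) x 0
  simp only [norm_zero, zero_pow two_ne_zero, mul_zero, Real.exp_zero, one_smul] at hconst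
  rw [← hconst, smul_smul, ← Real.exp_add, show -‖x‖ ^ 2 / 2 + 1 / 2 * ‖x‖ ^ 2 = 0 by ring,
    Real.exp_zero, one_smul]

theorem integral_norm_sq_exp_neg_norm_sq_div_two_smul [FiniteDimensional ℝ D]
    [MeasurableSpace D] [BorelSpace D] (c : F) :
    ∫ x : D, ‖Real.exp (-‖x‖ ^ 2 / 2) • c‖ ^ 2 =
      Real.pi ^ (Module.finrank ℝ D / 2 : ℝ) * ‖c‖ ^ 2 := by
  have h (x : D) : ‖Real.exp (-‖x‖ ^ 2 / 2) • c‖ ^ 2 = Real.exp (-1 * ‖x‖ ^ 2) * ‖c‖ ^ 2 := by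
    rw [norm_smul, Real.norm_of_nonneg (Real.exp_nonneg _), mul_pow, sq (Real.exp _),
      ← Real.exp_add]
    ring_nf
  simp only [h, integral_mul_const, GaussianFourier.integral_rexp_neg_mul_sq_norm one_pos, div_one]

end Gaussian

section Euclidean

open SchwartzMap

variable {n : ℕ}

theorem EuclideanSpace.continuousLinearMap_ext {ι F : Type*} [Fintype ι] [DecidableEq ι]
    [AddCommGroup F] [Module ℝ F] [TopologicalSpace F] {L₁ L₂ : EuclideanSpace ℝ ι →L[ℝ] F}
    (h : ∀ i, L₁ (EuclideanSpace.single i 1) = L₂ (EuclideanSpace.single i 1)) : L₁ = L₂ :=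
  ContinuousLinearMap.coe_injective <|
    (EuclideanSpace.basisFun ι ℝ).toBasis.ext fun i ↦ by simpa using h i

theorem forall_coord_mul_eq_neg_fderiv_iff {f : EuclideanSpace ℝ (Fin n) → ℂ}
    (hf : Differentiable ℝ f) :
    (∀ x (j : Fin n), (x j : ℂ) * f x = -fderiv ℝ f x (EuclideanSpace.single j 1)) ↔
      ∀ x, HasFDerivAt f (-(innerSL ℝ x).smulRight (f x)) x := by
  have hfderiv_iff (x) : fderiv ℝ f x = -(innerSL ℝ x).smulRight (f x) ↔
      ∀ j : Fin n, (x j : ℂ) * f x = -fderiv ℝ f x (EuclideanSpace.single j 1) := by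
    refine ⟨fun h j ↦ ?_, fun h ↦ EuclideanSpace.continuousLinearMap_ext fun j ↦ ?_⟩
    · simp [h, EuclideanSpace.inner_single_right, Complex.real_smul]
    · simp [EuclideanSpace.inner_single_right, Complex.real_smul, h j]
  refine ⟨fun h x ↦ ?_, fun h x ↦ (hfderiv_iff x).1 (h x).fderiv⟩
  rw [← (hfderiv_iff x).2 (h x)]
  exact (hf x).hasFDerivAt

/-- `√2` times the `j`-th annihilation operator of quantum mechanics. -/
noncomputable def annihilation (j : Fin n) (φ : 𝓢(EuclideanSpace ℝ (Fin n), ℂ)) :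
    𝓢(EuclideanSpace ℝ (Fin n), ℂ) :=
  smulLeftCLM ℂ ⇑(EuclideanSpace.proj j : EuclideanSpace ℝ (Fin n) →L[ℝ] ℝ) φ +
    ∂_{EuclideanSpace.single j (1 : ℝ)} φ

theorem annihilation_apply (j : Fin n) (φ : 𝓢(EuclideanSpace ℝ (Fin n), ℂ)) (x) :
    annihilation j φ x = (x j : ℂ) * φ x + fderiv ℝ φ x (EuclideanSpace.single j 1) := by
  rw [annihilation, add_apply, smulLeftCLM_apply_apply (EuclideanSpace.proj j).hasTemperateGrowth,
    lineDerivOp_apply_eq_fderiv]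
  simp [Complex.real_smul]

theorem sum_integral_norm_sq_annihilation (φ : 𝓢(EuclideanSpace ℝ (Fin n), ℂ)) :
    ∑ j, ∫ x, ‖annihilation j φ x‖ ^ 2 =
      (∑ j, ∫ x, ‖(x j : ℂ) * φ x‖ ^ 2) +
        (∑ j, ∫ x, ‖fderiv ℝ φ x (EuclideanSpace.single j 1)‖ ^ 2) - n * ∫ x, ‖φ x‖ ^ 2 := by
  have h (j : Fin n) := integral_norm_sq_smulLeftCLM_add_lineDerivOp volume
    (EuclideanSpace.proj j) (EuclideanSpace.single j 1) φ
  simp only [annihilation, h, Finset.sum_sub_distrib, Finset.sum_add_distrib]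
  simp [Complex.real_smul, lineDerivOp_apply_eq_fderiv]

theorem forall_annihilation_eq_zero_iff (φ : 𝓢(EuclideanSpace ℝ (Fin n), ℂ)) :
    (∀ j, annihilation j φ = 0) ↔
      n * ∫ x, ‖φ x‖ ^ 2 = (∑ j, ∫ x, ‖(x j : ℂ) * φ x‖ ^ 2) +
        ∑ j, ∫ x, ‖fderiv ℝ φ x (EuclideanSpace.single j 1)‖ ^ 2 := by
  calc (∀ j, annihilation j φ = 0) ↔ ∀ j ∈ Finset.univ, ∫ x, ‖annihilation j φ x‖ ^ 2 = 0 := by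
        simp [integral_norm_sq_eq_zero_iff]
    _ ↔ ∑ j, ∫ x, ‖annihilation j φ x‖ ^ 2 = 0 :=
        (Finset.sum_eq_zero_iff_of_nonneg fun j _ ↦ integral_nonneg fun x ↦ sq_nonneg _).symm
    _ ↔ _ := by rw [sum_integral_norm_sq_annihilation, sub_eq_zero, eq_comm]

theorem annihilation_eq_zero_iff (j : Fin n) (φ : 𝓢(EuclideanSpace ℝ (Fin n), ℂ)) :
    annihilation j φ = 0 ↔
      ∀ x, (x j : ℂ) * φ x = -fderiv ℝ φ x (EuclideanSpace.single j 1) := by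
  simp [SchwartzMap.ext_iff, annihilation_apply, add_eq_zero_iff_eq_neg]

theorem exists_phase_of_eq_exp_neg_norm_sq_div_two_smul {f : EuclideanSpace ℝ (Fin n) → ℂ}
    (hf : ∀ x, f x = Real.exp (-‖x‖ ^ 2 / 2) • f 0) :
    ∃ θ : ℝ, ∀ x, f x = Complex.exp (θ * Complex.I) * ((Real.pi ^ (-(n : ℝ) / 4) : ℝ) : ℂ) *
      (Real.sqrt (∫ x, ‖f x‖ ^ 2) : ℂ) * Complex.exp (-((‖x‖ : ℂ) ^ 2) / 2) := by
  have hint : ∫ x, ‖f x‖ ^ 2 = Real.pi ^ (n / 2 : ℝ) * ‖f 0‖ ^ 2 := by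
    simpa [← hf] using
      integral_norm_sq_exp_neg_norm_sq_div_two_smul (D := EuclideanSpace ℝ (Fin n)) (f 0)
  have hsqrt : Real.sqrt (∫ x, ‖f x‖ ^ 2) = Real.pi ^ (n / 4 : ℝ) * ‖f 0‖ := by
    rw [hint, Real.sqrt_mul (by positivity), Real.sqrt_sq (norm_nonneg _), Real.sqrt_eq_rpow,
      ← Real.rpow_mul Real.pi_pos.le]
    ring_nf
  have hpi : ((Real.pi ^ (-(n : ℝ) / 4) : ℝ) : ℂ) * ((Real.pi ^ (n / 4 : ℝ) : ℝ) : ℂ) = 1 := by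
    rw [← Complex.ofReal_mul, neg_div, Real.rpow_neg Real.pi_pos.le,
      inv_mul_cancel₀ (by positivity), Complex.ofReal_one]
  have hpolar := Complex.norm_mul_exp_arg_mul_I (f 0)
  refine ⟨Complex.arg (f 0), fun x ↦ ?_⟩
  rw [hsqrt, hf x, Complex.real_smul, Complex.ofReal_exp]
  push_cast
  linear_combination (-Complex.exp (-((‖x‖ : ℂ) ^ 2) / 2)) * hpolar
    - Complex.exp (-((‖x‖ : ℂ) ^ 2) / 2) * ‖f 0‖ * Complex.exp (Complex.arg (f 0) * Complex.I) * hpi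

end Euclidean

theorem stmt_14_general (n : ℕ)
    (φ : SchwartzMap (EuclideanSpace ℝ (Fin n)) ℂ)
    (nφ : ℝ) (hnφ : nφ = Real.sqrt (∫ x, ‖φ x‖ ^ 2)) :
    List.TFAE
      [(n : ℝ) * ∫ x, ‖φ x‖ ^ 2
          = (∑ j, ∫ x, ‖(x j : ℂ) * φ x‖ ^ 2) +
            ∑ j, ∫ x, ‖fderiv ℝ (⇑φ) x (EuclideanSpace.single j 1)‖ ^ 2,
        ∀ (x : EuclideanSpace ℝ (Fin n)) (j : Fin n),
          (x j : ℂ) * φ x = -(fderiv ℝ (⇑φ) x (EuclideanSpace.single j 1)),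
        ∃ θ : ℝ, ∀ x : EuclideanSpace ℝ (Fin n),
          φ x = Complex.exp (θ * Complex.I) *
            ((Real.pi ^ (-(n : ℝ) / 4) : ℝ) : ℂ) * (nφ : ℂ) *
            Complex.exp (-((‖x‖ : ℂ) ^ 2) / 2)] := by
  have hode := forall_coord_mul_eq_neg_fderiv_iff φ.differentiable
  tfae_have 1 ↔ 2 := by
    rw [← forall_annihilation_eq_zero_iff, forall_comm]
    exact forall_congr' fun j ↦ annihilation_eq_zero_iff j φ
  tfae_have 2 → 3 := fun h ↦ hnφ ▸ exists_phase_of_eq_exp_neg_norm_sq_div_two_smul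
    (eq_exp_neg_norm_sq_div_two_smul_of_hasFDerivAt (hode.1 h))
  tfae_have 3 → 2 := by
    rintro ⟨θ, hθ⟩
    set c := Complex.exp (θ * Complex.I) * ((Real.pi ^ (-(n : ℝ) / 4) : ℝ) : ℂ) * (nφ : ℂ)
    have hφ : ⇑φ = fun x ↦ Real.exp (-‖x‖ ^ 2 / 2) • c := by
      ext x
      rw [hθ x, Complex.real_smul, Complex.ofReal_exp]
      push_cast
      ring
    refine hode.2 fun x ↦ ?_
    rw [hφ]
    exact hasFDerivAt_exp_neg_norm_sq_div_two_smul c x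
  tfae_finish

/-- Characterization of the Gaussian (coherent state): for a Schwartz function `φ`,
`n‖φ‖² = ‖xφ‖² + ‖∇φ‖²` iff `xφ = −∇φ` iff `φ` is the normalized Gaussian up to a phase. -/
theorem stmt_14 (n : ℕ) (hn : 1 ≤ n)
    (φ : SchwartzMap (EuclideanSpace ℝ (Fin n)) ℂ)
    (nφ : ℝ) (hnφ : nφ = Real.sqrt (∫ x, ‖φ x‖ ^ 2)) :
    List.TFAE
      [(n : ℝ) * ∫ x, ‖φ x‖ ^ 2
          = (∑ j, ∫ x, ‖(x j : ℂ) * φ x‖ ^ 2) +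
            ∑ j, ∫ x, ‖fderiv ℝ (⇑φ) x (EuclideanSpace.single j 1)‖ ^ 2,
        ∀ (x : EuclideanSpace ℝ (Fin n)) (j : Fin n),
          (x j : ℂ) * φ x = -(fderiv ℝ (⇑φ) x (EuclideanSpace.single j 1)),
        ∃ θ : ℝ, ∀ x : EuclideanSpace ℝ (Fin n),
          φ x = Complex.exp (θ * Complex.I) *
            ((Real.pi ^ (-(n : ℝ) / 4) : ℝ) : ℂ) * (nφ : ℂ) *
            Complex.exp (-((‖x‖ : ℂ) ^ 2) / 2)] :=
  stmt_14_general n φ nφ hnφ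
end

section
/- Let n ≥ 1. (1) For every Schwartz function φ : ℝⁿ → ℂ, the equality ‖x·∇φ‖² = ‖x·∇φ + (n/2)φ‖² + (n/2)² ‖φ‖² holds. (2) There does not exist a nonzero Schwartz function φ : ℝⁿ → ℂ satisfying ‖x·∇φ‖² = (n/2)² ‖φ‖²; in particular, the inequality (n/2)‖φ‖ ≤ ‖x·∇φ‖ holds for all Schwartz φ and is an equality only for φ = 0. -/
/-!
Integrating each `x_j ∂_j` by parts against `φ` gives the virial identity
`∫ ⟪φ, x·∇φ⟫ = -(n/2) ‖φ‖²`, which turns the expansion of `‖x·∇φ + (n/2)φ‖²` into the identity.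
In the equality case `x·∇φ = -(n/2)φ`, so `s ↦ sⁿ φ(s² x)` has zero derivative on all of `ℝ`;
comparing `s = 1` with `s = 0` gives `φ x = 0`.
-/

open MeasureTheory SchwartzMap LineDeriv

/-- The operator `x·∇` applied to `φ`: `(x·∇φ)(x) = Σ_j x_j ∂_jφ(x)`. -/
noncomputable def xGrad (n : ℕ) (φ : EuclideanSpace ℝ (Fin n) → ℂ) :
    EuclideanSpace ℝ (Fin n) → ℂ :=
  fun x => ∑ j, (x j : ℂ) * fderiv ℝ φ x (EuclideanSpace.single j 1)

theorem eq_zero_of_fderiv_apply_self_add_half_smul_eq_zero {E F : Type*} [NormedAddCommGroup E]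
    [NormedSpace ℝ E] [NormedAddCommGroup F] [NormedSpace ℝ F] {f : E → F}
    (hf : Differentiable ℝ f) {k : ℕ} (hk : k ≠ 0)
    (h : ∀ x, fderiv ℝ f x x + ((k : ℝ) / 2) • f x = 0) : f = 0 := by
  obtain ⟨m, rfl⟩ := Nat.exists_eq_add_one_of_ne_zero hk
  funext x
  have hg : ∀ s : ℝ, HasDerivAt (fun s : ℝ ↦ s ^ (m + 1) • f (s ^ 2 • x)) 0 s := fun s ↦ by
    have hray : HasDerivAt (fun s : ℝ ↦ s ^ 2 • x) ((2 * s) • x) s := by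
      simpa using (hasDerivAt_pow 2 s).smul_const x
    have hD := (hasDerivAt_pow (m + 1) s).fun_smul ((hf _).hasFDerivAt.comp_hasDerivAt s hray)
    have hDx : s ^ 2 • fderiv ℝ f (s ^ 2 • x) x = -((((m + 1 : ℕ) : ℝ) / 2) • f (s ^ 2 • x)) := by
      simpa only [map_smul] using eq_neg_of_add_eq_zero_left (h (s ^ 2 • x))
    have hval : (s ^ (m + 1) * (2 * s)) • fderiv ℝ f (s ^ 2 • x) x
        + (((m + 1 : ℕ) : ℝ) * s ^ (m + 1 - 1)) • f (s ^ 2 • x) = 0 := by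
      rw [show s ^ (m + 1) * (2 * s) = 2 * s ^ m * s ^ 2 by ring, ← smul_smul, hDx, smul_neg,
        smul_smul, neg_add_eq_zero, Nat.add_sub_cancel]
      ring_nf
    rw [Function.comp_apply, map_smul, smul_smul, hval] at hD
    exact hD
  simpa using is_const_of_deriv_eq_zero (fun s ↦ (hg s).differentiableAt)
    (fun s ↦ (hg s).deriv) 1 0

namespace SchwartzMap

variable {E F : Type*} [NormedAddCommGroup E] [NormedSpace ℝ E]
  [NormedAddCommGroup F] [InnerProductSpace ℝ F]

noncomputable def euler : 𝓢(E, F) →L[ℝ] 𝓢(E, F) :=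
  bilinLeftCLM (ContinuousLinearMap.id ℝ (E →L[ℝ] F)) Function.HasTemperateGrowth.id
    ∘L fderivCLM ℝ E F

@[simp]
theorem euler_apply (f : 𝓢(E, F)) (x : E) : euler f x = fderiv ℝ f x x := rfl

theorem euler_apply_eq_sum {ι : Type*} [Fintype ι] (b : Module.Basis ι ℝ E) (f : 𝓢(E, F))
    (x : E) : euler f x = ∑ i, b.coord i x • ∂_{b i} f x :=
  calc euler f x = fderiv ℝ f x (∑ i, b.repr x i • b i) := by rw [b.sum_repr, euler_apply]
    _ = _ := by
      simp only [map_sum, map_smul, Module.Basis.coord_apply, lineDerivOp_apply_eq_fderiv]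

theorem lineDerivOp_smulLeftCLM (ℓ : E →L[ℝ] ℝ) (f : 𝓢(E, F)) (v x : E) :
    ∂_{v} (smulLeftCLM F ℓ f) x = ℓ x • ∂_{v} f x + ℓ v • f x := by
  rw [lineDerivOp_apply_eq_fderiv, lineDerivOp_apply_eq_fderiv,
    smulLeftCLM_apply ℓ.hasTemperateGrowth f, (ℓ.hasFDerivAt.fun_smul (f.hasFDerivAt x)).fderiv]
  simp

variable [FiniteDimensional ℝ E] [MeasurableSpace E] [BorelSpace E]
  {μ : Measure E} [μ.IsAddHaarMeasure]

theorem integrable_inner (f g : 𝓢(E, F)) : Integrable (fun x ↦ inner ℝ (f x) (g x)) μ :=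
  (pairing (innerSL ℝ) f g).integrable

theorem integrable_norm_sq (f : 𝓢(E, F)) : Integrable (fun x ↦ ‖f x‖ ^ 2) μ := by
  simpa only [real_inner_self_eq_norm_sq] using integrable_inner f f (μ := μ)

theorem integrable_mul_inner (ℓ : E →L[ℝ] ℝ) (f g : 𝓢(E, F)) :
    Integrable (fun x ↦ ℓ x * inner ℝ (f x) (g x)) μ :=
  (integrable_inner (smulLeftCLM F ℓ f) g).congr <| ae_of_all _ fun x ↦ by
    simp [smulLeftCLM_apply_apply ℓ.hasTemperateGrowth, real_inner_smul_left]

theorem eq_zero_of_integral_norm_sq_eq_zero {f : 𝓢(E, F)} (h : ∫ x, ‖f x‖ ^ 2 ∂μ = 0) :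
    f = 0 := by
  have hae := (integral_eq_zero_iff_of_nonneg (fun x ↦ by positivity) (integrable_norm_sq f)).1 h
  have hzero := (Continuous.ae_eq_iff_eq μ (by fun_prop) continuous_const).1 hae
  ext x
  have hx : ‖f x‖ ^ 2 = 0 := congrFun hzero x
  simpa using hx

/-- Moving `∂_v` onto `x ↦ ℓ x • f x` reproduces the left-hand side, plus `ℓ v * ‖f‖²`. -/
theorem integral_mul_inner_lineDerivOp_self (ℓ : E →L[ℝ] ℝ) (f : 𝓢(E, F)) (v : E) :
    ∫ x, ℓ x * inner ℝ (f x) (∂_{v} f x) ∂μ = -(ℓ v / 2) * ∫ x, ‖f x‖ ^ 2 ∂μ := by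
  have hibp := integral_bilinear_lineDerivOp_right_eq_neg_left (μ := μ)
    (smulLeftCLM F ℓ f) f (innerSL ℝ) v
  have hleft : ∀ x, innerSL ℝ (smulLeftCLM F ℓ f x) (∂_{v} f x)
      = ℓ x * inner ℝ (f x) (∂_{v} f x) := fun x ↦ by
    rw [smulLeftCLM_apply_apply ℓ.hasTemperateGrowth, innerSL_apply_apply, real_inner_smul_left]
  have hright : ∀ x, innerSL ℝ (∂_{v} (smulLeftCLM F ℓ f) x) (f x)
      = ℓ x * inner ℝ (f x) (∂_{v} f x) + ℓ v * ‖f x‖ ^ 2 := fun x ↦ by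
    rw [lineDerivOp_smulLeftCLM, innerSL_apply_apply, inner_add_left, real_inner_smul_left,
      real_inner_smul_left, real_inner_self_eq_norm_sq, real_inner_comm]
  simp only [hleft, hright] at hibp
  rw [integral_add (integrable_mul_inner ℓ f _) ((integrable_norm_sq f).const_mul _),
    integral_const_mul (ℓ v)] at hibp
  linarith

theorem integral_inner_euler_self (f : 𝓢(E, F)) :
    ∫ x, inner ℝ (f x) (euler f x) ∂μ = -(Module.finrank ℝ E / 2) * ∫ x, ‖f x‖ ^ 2 ∂μ := by
  let b := Module.finBasis ℝ E
  let ℓ : Fin (Module.finrank ℝ E) → E →L[ℝ] ℝ := fun i ↦ (b.coord i).toContinuousLinearMap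
  have hsum : ∀ x, inner ℝ (f x) (euler f x) = ∑ i, ℓ i x * inner ℝ (f x) (∂_{b i} f x) :=
    fun x ↦ by simp [euler_apply_eq_sum b, inner_sum, real_inner_smul_right, ℓ]
  have hℓ : ∀ i, ℓ i (b i) = 1 := fun i ↦ by simp [ℓ]
  simp only [hsum]
  rw [integral_finsetSum _ fun i _ ↦ integrable_mul_inner (ℓ i) f _]
  simp only [integral_mul_inner_lineDerivOp_self, hℓ, Finset.sum_const, Finset.card_univ,
    Fintype.card_fin, nsmul_eq_mul]
  ring

theorem integral_norm_euler_add_smul_sq (f : 𝓢(E, F)) (c : ℝ) :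
    ∫ x, ‖euler f x + c • f x‖ ^ 2 ∂μ
      = ∫ x, ‖euler f x‖ ^ 2 ∂μ + (c ^ 2 - Module.finrank ℝ E * c) * ∫ x, ‖f x‖ ^ 2 ∂μ := by
  have hpt : ∀ x, ‖euler f x + c • f x‖ ^ 2
      = ‖euler f x‖ ^ 2 + (2 * c * inner ℝ (f x) (euler f x) + c ^ 2 * ‖f x‖ ^ 2) := fun x ↦ by
    rw [norm_add_sq_real, real_inner_smul_right, norm_smul, mul_pow, Real.norm_eq_abs, sq_abs,
      real_inner_comm]
    ring
  have hcross : Integrable (fun x ↦ 2 * c * inner ℝ (f x) (euler f x) + c ^ 2 * ‖f x‖ ^ 2) μ :=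
    ((integrable_inner _ _).const_mul _).add ((integrable_norm_sq f).const_mul _)
  simp only [hpt]
  rw [integral_add (integrable_norm_sq _) hcross,
    integral_add ((integrable_inner _ _).const_mul _) ((integrable_norm_sq f).const_mul _),
    integral_const_mul, integral_const_mul, integral_inner_euler_self]
  ring

theorem eq_zero_of_integral_norm_euler_sq_eq {f : 𝓢(E, F)} (hE : Module.finrank ℝ E ≠ 0)
    (h : ∫ x, ‖euler f x‖ ^ 2 ∂μ = (Module.finrank ℝ E / 2) ^ 2 * ∫ x, ‖f x‖ ^ 2 ∂μ) :
    f = 0 := by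
  set c : ℝ := Module.finrank ℝ E / 2
  have hzero : ∫ x, ‖(euler f + c • f) x‖ ^ 2 ∂μ = 0 := by
    simp only [add_apply, smul_apply]
    rw [integral_norm_euler_add_smul_sq, h]
    ring
  have hsum := congrArg (⇑) (eq_zero_of_integral_norm_sq_eq_zero hzero)
  refine DFunLike.coe_injective (eq_zero_of_fderiv_apply_self_add_half_smul_eq_zero
    f.differentiable hE fun x ↦ ?_)
  simpa using congrFun hsum x

end SchwartzMap

theorem xGrad_eq_euler {n : ℕ} (φ : 𝓢(EuclideanSpace ℝ (Fin n), ℂ)) : xGrad n φ = euler φ := by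
  funext x
  rw [euler_apply_eq_sum (EuclideanSpace.basisFun (Fin n) ℝ).toBasis]
  simp [xGrad, lineDerivOp_apply_eq_fderiv, Complex.real_smul]

/-- (1) The equality `‖x·∇φ‖² = ‖x·∇φ + (n/2)φ‖² + (n/2)²‖φ‖²` holds for every
Schwartz function `φ`; (2) there is no nonzero Schwartz `φ` with
`‖x·∇φ‖² = (n/2)²‖φ‖²`; in particular `(n/2)‖φ‖ ≤ ‖x·∇φ‖` for every Schwartz `φ`,
with equality only for `φ = 0`. -/
theorem stmt_16 (n : ℕ) (hn : 1 ≤ n) :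
    (∀ φ : SchwartzMap (EuclideanSpace ℝ (Fin n)) ℂ,
      ∫ x, ‖xGrad n (⇑φ) x‖ ^ 2
        = (∫ x, ‖xGrad n (⇑φ) x + (((n : ℝ) / 2 : ℝ) : ℂ) * φ x‖ ^ 2) +
          ((n : ℝ) / 2) ^ 2 * ∫ x, ‖φ x‖ ^ 2) ∧
    (¬ ∃ φ : SchwartzMap (EuclideanSpace ℝ (Fin n)) ℂ, φ ≠ 0 ∧
      ∫ x, ‖xGrad n (⇑φ) x‖ ^ 2 = ((n : ℝ) / 2) ^ 2 * ∫ x, ‖φ x‖ ^ 2) ∧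
    (∀ φ : SchwartzMap (EuclideanSpace ℝ (Fin n)) ℂ,
      ((n : ℝ) / 2) * Real.sqrt (∫ x, ‖φ x‖ ^ 2)
          ≤ Real.sqrt (∫ x, ‖xGrad n (⇑φ) x‖ ^ 2) ∧
        (((n : ℝ) / 2) * Real.sqrt (∫ x, ‖φ x‖ ^ 2)
            = Real.sqrt (∫ x, ‖xGrad n (⇑φ) x‖ ^ 2) → φ = 0)) := by
  have hdim : Module.finrank ℝ (EuclideanSpace ℝ (Fin n)) = n := finrank_euclideanSpace_fin
  have hsplit (φ : 𝓢(EuclideanSpace ℝ (Fin n), ℂ)) :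
      ∫ x, ‖xGrad n φ x + (((n : ℝ) / 2 : ℝ) : ℂ) * φ x‖ ^ 2
        = (∫ x, ‖xGrad n φ x‖ ^ 2) - ((n : ℝ) / 2) ^ 2 * ∫ x, ‖φ x‖ ^ 2 := by
    simp only [xGrad_eq_euler, ← Complex.real_smul]
    rw [integral_norm_euler_add_smul_sq, hdim]
    ring
  have hrigid (φ : 𝓢(EuclideanSpace ℝ (Fin n), ℂ))
      (h : ∫ x, ‖xGrad n φ x‖ ^ 2 = ((n : ℝ) / 2) ^ 2 * ∫ x, ‖φ x‖ ^ 2) : φ = 0 := by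
    rw [xGrad_eq_euler] at h
    exact eq_zero_of_integral_norm_euler_sq_eq (by omega) (by rwa [hdim])
  have hsqrt (φ : 𝓢(EuclideanSpace ℝ (Fin n), ℂ)) :
      (n : ℝ) / 2 * √(∫ x, ‖φ x‖ ^ 2) = √(((n : ℝ) / 2) ^ 2 * ∫ x, ‖φ x‖ ^ 2) := by
    rw [Real.sqrt_mul (by positivity), Real.sqrt_sq (by positivity)]
  have hnonneg (g : EuclideanSpace ℝ (Fin n) → ℂ) : 0 ≤ ∫ x, ‖g x‖ ^ 2 :=
    integral_nonneg fun x ↦ by positivity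
  refine ⟨fun φ ↦ by rw [hsplit]; ring, fun ⟨φ, hφ, h⟩ ↦ hφ (hrigid φ h), fun φ ↦ ⟨?_, ?_⟩⟩
  · rw [hsqrt]
    exact Real.sqrt_le_sqrt (sub_nonneg.1 ((hnonneg _).trans_eq (hsplit φ)))
  · rw [hsqrt, Real.sqrt_inj (mul_nonneg (by positivity) (hnonneg φ)) (hnonneg _)]
    exact fun h ↦ hrigid φ h.symm
end

section
/- Let n ≥ 3 and let ψ : ℝⁿ → ℂ be a smooth function with compact support contained in ℝⁿ \ {0}. Then the Hardy-type equality ‖ (x/|x|)·∇ψ ‖² = ‖ (x/|x|)·∇ψ + ((n−2)/(2|x|)) ψ ‖² + ((n−2)/2)² ‖ ψ/|x| ‖² holds. -/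
open MeasureTheory Metric Set Filter

lemma aux_cont {d : ℕ} {F : Type*} [NormedAddCommGroup F]
    (f : EuclideanSpace ℝ (Fin d) → F) (K : Set (EuclideanSpace ℝ (Fin d)))
    (hKc : IsClosed K) (h0 : (0 : EuclideanSpace ℝ (Fin d)) ∉ K)
    (hf : ContinuousOn f {(0 : EuclideanSpace ℝ (Fin d))}ᶜ)
    (hzero : ∀ x ∉ K, f x = 0) : Continuous f := by
  rw [continuous_iff_continuousAt]
  intro x
  by_cases hx : x ∈ K
  · have hx0 : x ∈ ({(0 : EuclideanSpace ℝ (Fin d))}ᶜ : Set _) := by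
      simp only [mem_compl_iff, mem_singleton_iff]
      rintro rfl; exact h0 hx
    exact hf.continuousAt (isOpen_compl_singleton.mem_nhds hx0)
  · have hev : f =ᶠ[nhds x] fun _ => 0 := by
      filter_upwards [hKc.isOpen_compl.mem_nhds hx] with y hy using hzero y hy
    exact ContinuousAt.congr continuousAt_const hev.symm

lemma aux_integral_fderiv_eq_zero {d : ℕ} (W : EuclideanSpace ℝ (Fin d) → ℝ)
    (hW : ContDiff ℝ 1 W) (hsupp : HasCompactSupport W) (v : EuclideanSpace ℝ (Fin d)) :
    ∫ x, fderiv ℝ W x v = 0 := by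
  obtain ⟨C, hC⟩ := hW.lipschitzWith_of_hasCompactSupport hsupp one_ne_zero
  obtain ⟨r, hr, hball⟩ : ∃ r > 0, tsupport W ⊆ ball 0 r :=
    hsupp.isCompact.isBounded.subset_ball_lt 0 0
  set b : ContDiffBump (0 : EuclideanSpace ℝ (Fin d)) := ⟨r, 2*r, hr, by linarith⟩
  have hg1 : ∀ x ∈ ball (0 : EuclideanSpace ℝ (Fin d)) r, b x = 1 := fun x hx =>
    b.one_of_mem_closedBall (ball_subset_closedBall hx)
  obtain ⟨D, hD⟩ := ContDiff.lipschitzWith_of_hasCompactSupport b.hasCompactSupport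
    b.contDiff (one_ne_zero : (1 : WithTop ℕ∞) ≠ 0)
  have key := hC.integral_lineDeriv_mul_eq hD b.hasCompactSupport v (μ := volume)
  have hrhs : ∀ x, lineDeriv ℝ (⇑b) x (-v) * W x = 0 := by
    intro x
    by_cases hx : W x = 0
    · simp [hx]
    · have hx' : x ∈ ball (0 : EuclideanSpace ℝ (Fin d)) r :=
        hball (subset_tsupport W hx)
      have : lineDeriv ℝ (⇑b) x (-v) = lineDeriv ℝ (fun _ => (1:ℝ)) x (-v) := by
        apply Filter.EventuallyEq.lineDeriv_eq
        filter_upwards [isOpen_ball.mem_nhds hx'] with y hy using hg1 y hy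
      have : lineDeriv ℝ (fun _ : EuclideanSpace ℝ (Fin d) => (1:ℝ)) x (-v) = 0 := by
        simp [lineDeriv]
      simp_all
  have hlhs : ∀ x, lineDeriv ℝ W x v * b x = fderiv ℝ W x v := by
    intro x
    by_cases hx : x ∈ ball (0 : EuclideanSpace ℝ (Fin d)) r
    · rw [hg1 x hx, mul_one,
        (hW.differentiable one_ne_zero x).lineDeriv_eq_fderiv]
    · have hx' : x ∉ tsupport W := fun h => hx (hball h)
      have hW0 : fderiv ℝ W x = 0 := by
        have hev : W =ᶠ[nhds x] (fun _ => (0:ℝ)) := by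
          filter_upwards [(isClosed_tsupport W).isOpen_compl.mem_nhds hx'] with y hy
            using image_eq_zero_of_notMem_tsupport hy
        rw [hev.fderiv_eq]
        exact fderiv_const_apply 0
      have hl0 : lineDeriv ℝ W x v = 0 := by
        rw [(hW.differentiable one_ne_zero x).lineDeriv_eq_fderiv, hW0]; rfl
      rw [hl0, hW0]; simp
  calc ∫ x, fderiv ℝ W x v = ∫ x, lineDeriv ℝ W x v * b x := by
        simp_rw [hlhs]
      _ = ∫ x, lineDeriv ℝ (⇑b) x (-v) * W x := key
      _ = 0 := by simp_rw [hrhs]; exact integral_zero _ _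

lemma aux_ibp {d : ℕ} (u : EuclideanSpace ℝ (Fin d) → ℝ)
    (hu : ContDiff ℝ 1 u) (hcs : HasCompactSupport u) (h0 : 0 ∉ tsupport u) :
    ∫ x, (∑ j, (x j / ‖x‖ ^ 2) * fderiv ℝ u x (EuclideanSpace.single j 1))
      = -((d : ℝ) - 2) * ∫ x, u x / ‖x‖ ^ 2 := by
  have hu' : Differentiable ℝ u := hu.differentiable one_ne_zero
  have hu0 : ∀ x ∉ tsupport u, u x = 0 := fun x hx => image_eq_zero_of_notMem_tsupport hx
  have hud0 : ∀ x ∉ tsupport u, fderiv ℝ u x = 0 := by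
    intro x hx
    by_contra h
    exact hx (support_fderiv_subset ℝ (f := u) h)
  have hsq : ∀ x : EuclideanSpace ℝ (Fin d), ∑ j, (x j)^2 = ‖x‖^2 := by
    intro x
    rw [EuclideanSpace.norm_eq, Real.sq_sqrt (by positivity)]
    simp [sq_abs]
  -- the vector field
  set W : Fin d → EuclideanSpace ℝ (Fin d) → ℝ :=
    fun j x => x j / ‖x‖ ^ 2 * u x with hWdef
  have hcoord : ∀ j, ContDiff ℝ 1 (fun x : EuclideanSpace ℝ (Fin d) => x j) := by
    intro j
    have h : (fun x : EuclideanSpace ℝ (Fin d) => x j)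
        = ⇑(EuclideanSpace.proj (𝕜 := ℝ) j) := by ext x; simp
    rw [h]; exact (EuclideanSpace.proj (𝕜 := ℝ) j).contDiff
  have hWc : ∀ j, ContDiff ℝ 1 (W j) := by
    intro j
    rw [contDiff_iff_contDiffAt]
    intro x
    by_cases hx : x ∈ tsupport u
    · have hx0 : x ≠ 0 := fun h => h0 (h ▸ hx)
      have hn2 : ‖x‖ ^ 2 ≠ 0 := pow_ne_zero _ (norm_ne_zero_iff.mpr hx0)
      exact (((hcoord j).contDiffAt.div ((contDiff_norm_sq ℝ).contDiffAt) hn2).mul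
        hu.contDiffAt)
    · have hev : W j =ᶠ[nhds x] fun _ => 0 := by
        filter_upwards [(isClosed_tsupport u).isOpen_compl.mem_nhds hx] with y hy
        simp [hWdef, hu0 y hy]
      exact contDiffAt_const.congr_of_eventuallyEq hev
  have hWs : ∀ j, HasCompactSupport (W j) := by
    intro j
    apply HasCompactSupport.intro hcs
    intro x hx
    simp [hWdef, hu0 x hx]
  have hWd0 : ∀ j, ∀ x ∉ tsupport u, fderiv ℝ (W j) x = 0 := by
    intro j x hx
    have hev : W j =ᶠ[nhds x] fun _ => 0 := by
      filter_upwards [(isClosed_tsupport u).isOpen_compl.mem_nhds hx] with y hy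
      simp [hWdef, hu0 y hy]
    rw [hev.fderiv_eq]
    exact fderiv_const_apply 0
  -- pointwise divergence identity
  have hkey : ∀ x, (∑ j, fderiv ℝ (W j) x (EuclideanSpace.single j 1))
      = ((d : ℝ) - 2) / ‖x‖ ^ 2 * u x
        + ∑ j, (x j / ‖x‖ ^ 2) * fderiv ℝ u x (EuclideanSpace.single j 1) := by
    intro x
    by_cases hx0 : x = 0
    · subst hx0
      have hz : ∀ j, fderiv ℝ (W j) (0 : EuclideanSpace ℝ (Fin d)) = 0 :=
        fun j => hWd0 j 0 h0
      simp [hz, hu0 0 h0, hud0 0 h0]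
    · have hn2 : ‖x‖ ^ 2 ≠ 0 := pow_ne_zero _ (norm_ne_zero_iff.mpr hx0)
      have hterm : ∀ j, fderiv ℝ (W j) x (EuclideanSpace.single j 1)
          = x j / ‖x‖ ^ 2 * fderiv ℝ u x (EuclideanSpace.single j 1)
            + u x * ((‖x‖ ^ 2)⁻¹ - 2 * (x j) ^ 2 * ((‖x‖ ^ 2) ^ 2)⁻¹) := by
        intro j
        have h1 : HasFDerivAt (fun y : EuclideanSpace ℝ (Fin d) => y j)
            (EuclideanSpace.proj (𝕜 := ℝ) j) x := by
          have h : (fun y : EuclideanSpace ℝ (Fin d) => y j)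
              = ⇑(EuclideanSpace.proj (𝕜 := ℝ) j) := by ext y; simp
          rw [h]; exact (EuclideanSpace.proj (𝕜 := ℝ) j).hasFDerivAt
        have h2 : HasFDerivAt (fun y : EuclideanSpace ℝ (Fin d) => ‖y‖ ^ 2)
            ((2 : ℕ) • (innerSL ℝ x)) x := (hasStrictFDerivAt_norm_sq x).hasFDerivAt
        have h3 : HasFDerivAt (fun y : EuclideanSpace ℝ (Fin d) => (‖y‖ ^ 2)⁻¹)
            ((-((‖x‖ ^ 2) ^ 2)⁻¹) • ((2 : ℕ) • (innerSL ℝ x))) x :=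
          (hasDerivAt_inv hn2).comp_hasFDerivAt x h2
        have h4 := h1.mul h3
        have h5 := h4.mul (hu' x).hasFDerivAt
        have hWeq : W j = fun y => (y j * (‖y‖ ^ 2)⁻¹) * u y := by
          ext y; simp [hWdef, div_eq_mul_inv]
        rw [hWeq, show (fun y : EuclideanSpace ℝ (Fin d) => (y j * (‖y‖ ^ 2)⁻¹) * u y)
            = ((fun y : EuclideanSpace ℝ (Fin d) => y j) * fun y => (‖y‖ ^ 2)⁻¹) * u from rfl,
          h5.fderiv]
        simp only [ContinuousLinearMap.add_apply, ContinuousLinearMap.smul_apply,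
          ContinuousLinearMap.coe_smul', Pi.smul_apply, innerSL_apply_apply,
          PiLp.proj_apply, EuclideanSpace.single_apply, smul_eq_mul]
        rw [EuclideanSpace.inner_single_right]
        simp only [RCLike.star_def, starRingEnd_apply, star_trivial, if_pos rfl, Pi.mul_apply, ↓reduceIte]
        field_simp [norm_ne_zero_iff.mpr hx0]
        ring
      have hB : ∑ j, u x * ((‖x‖ ^ 2)⁻¹ - 2 * (x j) ^ 2 * ((‖x‖ ^ 2) ^ 2)⁻¹)
          = ((d : ℝ) - 2) / ‖x‖ ^ 2 * u x := by
        rw [← Finset.mul_sum, Finset.sum_sub_distrib, Finset.sum_const, Finset.card_univ,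
          Fintype.card_fin]
        have h2' : ∑ j, 2 * (x j) ^ 2 * ((‖x‖ ^ 2) ^ 2)⁻¹
            = 2 * ‖x‖ ^ 2 * ((‖x‖ ^ 2) ^ 2)⁻¹ := by
          rw [← Finset.sum_mul, ← Finset.mul_sum, hsq]
        rw [h2']
        field_simp
        have hxx : ‖x‖ ^ 2 * ‖x‖⁻¹ ^ 2 = 1 := by
          rw [← mul_pow, mul_inv_cancel₀ (norm_ne_zero_iff.mpr hx0), one_pow]
        linear_combination (u x * (d : ℝ)) * hxx
      rw [Finset.sum_congr rfl (fun j _ => hterm j), Finset.sum_add_distrib, hB, add_comm]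
  -- continuity of evaluated derivatives
  have happly : ∀ j, Continuous (fun x : EuclideanSpace ℝ (Fin d) =>
      fderiv ℝ u x (EuclideanSpace.single j 1)) := fun j =>
    (ContinuousLinearMap.apply ℝ ℝ (EuclideanSpace.single j 1)).continuous.comp
      (hu.continuous_fderiv one_ne_zero)
  set A : EuclideanSpace ℝ (Fin d) → ℝ := fun x => ((d : ℝ) - 2) / ‖x‖ ^ 2 * u x with hA
  set B : EuclideanSpace ℝ (Fin d) → ℝ := fun x =>
    ∑ j, (x j / ‖x‖ ^ 2) * fderiv ℝ u x (EuclideanSpace.single j 1) with hB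
  have hnorm_ne : ∀ x ∈ ({(0 : EuclideanSpace ℝ (Fin d))}ᶜ : Set _), ‖x‖ ^ 2 ≠ 0 := by
    intro x hx
    exact pow_ne_zero _ (norm_ne_zero_iff.mpr (by simpa using hx))
  have hcontA : Continuous A := by
    apply aux_cont _ (tsupport u) (isClosed_tsupport u) h0
    · exact (continuousOn_const.div (continuous_norm.pow 2).continuousOn hnorm_ne).mul
        hu.continuous.continuousOn
    · intro x hx; simp [hA, hu0 x hx]
  have hintA : Integrable A :=
    hcontA.integrable_of_hasCompactSupport
      (HasCompactSupport.intro hcs (fun x hx => by simp [hA, hu0 x hx]))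
  have hcontB : Continuous B := by
    apply aux_cont _ (tsupport u) (isClosed_tsupport u) h0
    · apply continuousOn_finset_sum
      intro j _
      exact (((hcoord j).continuous.continuousOn.div
        (continuous_norm.pow 2).continuousOn hnorm_ne).mul (happly j).continuousOn)
    · intro x hx; simp [hB, hud0 x hx]
  have hintB : Integrable B :=
    hcontB.integrable_of_hasCompactSupport
      (HasCompactSupport.intro hcs (fun x hx => by simp [hB, hud0 x hx]))
  have hints : ∀ j, Integrable (fun x => fderiv ℝ (W j) x (EuclideanSpace.single j 1)) := by
    intro j
    apply Continuous.integrable_of_hasCompactSupport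
    · exact (ContinuousLinearMap.apply ℝ ℝ (EuclideanSpace.single j 1)).continuous.comp
        ((hWc j).continuous_fderiv one_ne_zero)
    · apply HasCompactSupport.intro hcs
      intro x hx
      rw [hWd0 j x hx]
      rfl
  have hsum0 : ∫ x, ∑ j, fderiv ℝ (W j) x (EuclideanSpace.single j 1) = 0 := by
    rw [integral_finset_sum _ (fun j _ => hints j)]
    apply Finset.sum_eq_zero
    intro j _
    exact aux_integral_fderiv_eq_zero (W j) (hWc j) (hWs j) _
  have hAB : ∫ x, (A x + B x) = 0 := by
    rw [← hsum0]
    apply integral_congr_ae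
    filter_upwards with x
    rw [hkey x]
  rw [integral_add hintA hintB] at hAB
  have hAval : ∫ x, A x = ((d : ℝ) - 2) * ∫ x, u x / ‖x‖ ^ 2 := by
    have : A = fun x => ((d : ℝ) - 2) * (u x / ‖x‖ ^ 2) := by
      ext x; simp only [hA]; ring
    rw [this, integral_const_mul]
  have : ∫ x, B x = -((d : ℝ) - 2) * ∫ x, u x / ‖x‖ ^ 2 := by
    rw [neg_mul, ← hAval]; linarith
  exact this


open scoped RealInnerProductSpace in
/-- Hardy-type equality: for `n ≥ 3` and a smooth function `ψ` compactly supported in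
`ℝⁿ \ {0}`, one has `‖(x/|x|)·∇ψ‖² = ‖(x/|x|)·∇ψ + ((n−2)/(2|x|))ψ‖² + ((n−2)/2)²‖ψ/|x|‖²`.
Here `R x = Σ_j (x_j/|x|) ∂_jψ(x)` is the radial derivative of `ψ`. -/
theorem stmt_17 (n : ℕ) (hn : 3 ≤ n)
    (ψ : EuclideanSpace ℝ (Fin n) → ℂ)
    (hψ : ContDiff ℝ (⊤ : ℕ∞) ψ) (hsupp : HasCompactSupport ψ)
    (h0 : 0 ∉ tsupport ψ)
    (R : EuclideanSpace ℝ (Fin n) → ℂ)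
    (hR : R = fun x =>
      ∑ j, ((x j / ‖x‖ : ℝ) : ℂ) * fderiv ℝ ψ x (EuclideanSpace.single j 1)) :
    ∫ x, ‖R x‖ ^ 2
      = (∫ x, ‖R x + ((((n : ℝ) - 2) / (2 * ‖x‖) : ℝ) : ℂ) * ψ x‖ ^ 2) +
        (((n : ℝ) - 2) / 2) ^ 2 * ∫ x, ‖ψ x / (‖x‖ : ℂ)‖ ^ 2 := by
  have hψ1 : ContDiff ℝ 1 ψ := hψ.of_le (by simp)
  have hψd : Differentiable ℝ ψ := hψ1.differentiable one_ne_zero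
  have hψ0 : ∀ x ∉ tsupport ψ, ψ x = 0 := fun x hx => image_eq_zero_of_notMem_tsupport hx
  have hψd0 : ∀ x ∉ tsupport ψ, fderiv ℝ ψ x = 0 := by
    intro x hx
    by_contra h
    exact hx (support_fderiv_subset ℝ (f := ψ) h)
  set u : EuclideanSpace ℝ (Fin n) → ℝ := fun x => ‖ψ x‖ ^ 2 with hudef
  have hu : ContDiff ℝ 1 u := ContDiff.norm_sq (𝕜 := ℂ) hψ1
  have hucs : HasCompactSupport u :=
    HasCompactSupport.intro hsupp (fun x hx => by simp [hudef, hψ0 x hx])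
  have hu0 : (0 : EuclideanSpace ℝ (Fin n)) ∉ tsupport u := by
    intro h
    apply h0
    have : tsupport u ⊆ tsupport ψ := by
      apply closure_minimal _ (isClosed_tsupport ψ)
      intro x hx
      apply subset_tsupport ψ
      intro hψx
      simp [hudef, hψx] at hx
    exact this h
  -- derivative of u
  have hfu : ∀ (x : EuclideanSpace ℝ (Fin n)) v,
      ⟪ψ x, fderiv ℝ ψ x v⟫ = fderiv ℝ u x v / 2 := by
    intro x v
    have hd : HasFDerivAt (fun y => ‖ψ y‖ ^ 2)
        ((2 : ℕ) • (innerSL ℝ (ψ x)).comp (fderiv ℝ ψ x)) x :=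
      (hψd x).hasFDerivAt.norm_sq
    have : fderiv ℝ u x = (2 : ℕ) • (innerSL ℝ (ψ x)).comp (fderiv ℝ ψ x) := hd.fderiv
    rw [this]
    simp only [ContinuousLinearMap.smul_apply, ContinuousLinearMap.coe_comp', Function.comp_apply,
      innerSL_apply_apply, smul_eq_mul, nsmul_eq_mul, Nat.cast_ofNat]
    ring
  -- auxiliary continuity facts
  have happlyψ : ∀ j, Continuous (fun x : EuclideanSpace ℝ (Fin n) =>
      fderiv ℝ ψ x (EuclideanSpace.single j 1)) := fun j =>
    (ContinuousLinearMap.apply ℝ ℂ (EuclideanSpace.single j 1)).continuous.comp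
      (hψ1.continuous_fderiv one_ne_zero)
  have happlyu : ∀ j, Continuous (fun x : EuclideanSpace ℝ (Fin n) =>
      fderiv ℝ u x (EuclideanSpace.single j 1)) := fun j =>
    (ContinuousLinearMap.apply ℝ ℝ (EuclideanSpace.single j 1)).continuous.comp
      (hu.continuous_fderiv one_ne_zero)
  have hnorm_ne : ∀ x ∈ ({(0 : EuclideanSpace ℝ (Fin n))}ᶜ : Set _), ‖x‖ ≠ 0 := by
    intro x hx
    exact norm_ne_zero_iff.mpr (by simpa using hx)
  have hnorm_ne2 : ∀ x ∈ ({(0 : EuclideanSpace ℝ (Fin n))}ᶜ : Set _), ‖x‖ ^ 2 ≠ 0 :=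
    fun x hx => pow_ne_zero _ (hnorm_ne x hx)
  have hcoordc : ∀ j, Continuous (fun x : EuclideanSpace ℝ (Fin n) => x j) := by
    intro j
    have h : (fun x : EuclideanSpace ℝ (Fin n) => x j)
        = ⇑(EuclideanSpace.proj (𝕜 := ℝ) j) := by ext x; simp
    rw [h]; exact (EuclideanSpace.proj (𝕜 := ℝ) j).continuous
  -- R vanishes outside tsupport ψ and is continuous
  have hR0 : ∀ x ∉ tsupport ψ, R x = 0 := by
    intro x hx
    rw [hR]
    simp [hψd0 x hx]
  have hRcont : Continuous R := by
    apply aux_cont R (tsupport ψ) (isClosed_tsupport ψ) h0 _ hR0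
    rw [hR]
    apply continuousOn_finset_sum
    intro j _
    apply ContinuousOn.mul
    · exact (Complex.continuous_ofReal.comp_continuousOn
        (((hcoordc j).continuousOn.div continuous_norm.continuousOn hnorm_ne)))
    · exact (happlyψ j).continuousOn
  -- integrands
  set B : EuclideanSpace ℝ (Fin n) → ℝ := fun x =>
    ∑ j, (x j / ‖x‖ ^ 2) * fderiv ℝ u x (EuclideanSpace.single j 1) with hBdef
  set C : EuclideanSpace ℝ (Fin n) → ℝ := fun x => u x / ‖x‖ ^ 2 with hCdef
  have hud0 : ∀ x ∉ tsupport u, fderiv ℝ u x = 0 := by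
    intro x hx
    by_contra h
    exact hx (support_fderiv_subset ℝ (f := u) h)
  have hintB : Integrable B := by
    apply Continuous.integrable_of_hasCompactSupport
    · apply aux_cont B (tsupport u) (isClosed_tsupport u) hu0
      · apply continuousOn_finset_sum
        intro j _
        exact ((hcoordc j).continuousOn.div
          (continuous_norm.pow 2).continuousOn hnorm_ne2).mul (happlyu j).continuousOn
      · intro x hx; simp [hBdef, hud0 x hx]
    · exact HasCompactSupport.intro hucs (fun x hx => by simp [hBdef, hud0 x hx])
  have hu0' : ∀ x ∉ tsupport u, u x = 0 := fun x hx => image_eq_zero_of_notMem_tsupport hx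
  have hintC : Integrable C := by
    apply Continuous.integrable_of_hasCompactSupport
    · apply aux_cont C (tsupport u) (isClosed_tsupport u) hu0
      · exact hu.continuous.continuousOn.div
          (continuous_norm.pow 2).continuousOn hnorm_ne2
      · intro x hx; simp [hCdef, hu0' x hx]
    · exact HasCompactSupport.intro hucs (fun x hx => by simp [hCdef, hu0' x hx])
  have hintR2 : Integrable (fun x => ‖R x‖ ^ 2) := by
    apply Continuous.integrable_of_hasCompactSupport
    · exact (hRcont.norm.pow 2)
    · exact HasCompactSupport.intro hsupp (fun x hx => by rw [hR0 x hx]; simp)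
  set G : EuclideanSpace ℝ (Fin n) → ℝ := fun x =>
    ((n : ℝ) - 2) / 2 * B x + ((n : ℝ) - 2) ^ 2 / 4 * C x with hGdef
  have hintG : Integrable G := (hintB.const_mul _).add (hintC.const_mul _)
  -- pointwise identity
  have hP : ∀ x, ‖R x + ((((n : ℝ) - 2) / (2 * ‖x‖) : ℝ) : ℂ) * ψ x‖ ^ 2
      = ‖R x‖ ^ 2 + G x := by
    intro x
    by_cases hx : x ∈ tsupport ψ
    · have hx0 : x ≠ 0 := fun h => h0 (h ▸ hx)
      have hnx : ‖x‖ ≠ 0 := norm_ne_zero_iff.mpr hx0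
      set c : ℝ := ((n : ℝ) - 2) / (2 * ‖x‖) with hc
      have hsmul : ((c : ℝ) : ℂ) * ψ x = c • ψ x := (Complex.real_smul).symm
      rw [hsmul, norm_add_sq_real, real_inner_smul_right, norm_smul]
      have hinner : ⟪R x, ψ x⟫ = ∑ j, (x j / ‖x‖) * (fderiv ℝ u x (EuclideanSpace.single j 1) / 2) := by
        rw [hR]
        rw [sum_inner]
        apply Finset.sum_congr rfl
        intro j _
        have : ((x j / ‖x‖ : ℝ) : ℂ) * fderiv ℝ ψ x (EuclideanSpace.single j 1)
            = (x j / ‖x‖ : ℝ) • fderiv ℝ ψ x (EuclideanSpace.single j 1) :=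
          (Complex.real_smul).symm
        rw [this, real_inner_smul_left, real_inner_comm, hfu]
      rw [hinner]
      have hBx : ∑ j, (x j / ‖x‖) * (fderiv ℝ u x (EuclideanSpace.single j 1) / 2)
          = (‖x‖ / 2) * B x := by
        rw [hBdef, Finset.mul_sum]
        apply Finset.sum_congr rfl
        intro j _
        field_simp
      rw [hBx]
      have hnc : ‖c‖ = |c| := Real.norm_eq_abs c
      rw [hnc]
      have : (|c| * ‖ψ x‖) ^ 2 = c ^ 2 * u x := by
        rw [mul_pow, sq_abs, hudef]
      rw [this, hGdef, hc, hCdef]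
      field_simp
      ring
    · have h1 : ψ x = 0 := hψ0 x hx
      have h2 : R x = 0 := hR0 x hx
      have hxu : x ∉ tsupport u := by
        intro hxx
        have : tsupport u ⊆ tsupport ψ := by
          apply closure_minimal _ (isClosed_tsupport ψ)
          intro y hy
          apply subset_tsupport ψ
          intro hψy
          simp [hudef, hψy] at hy
        exact hx (this hxx)
      have h3 : u x = 0 := hu0' x hxu
      have h4 : fderiv ℝ u x = 0 := hud0 x hxu
      simp [h1, h2, hGdef, hBdef, hCdef, h3, h4]
  -- integral computations
  have hIB : ∫ x, B x = -((n : ℝ) - 2) * ∫ x, C x := by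
    rw [hBdef, hCdef]
    exact aux_ibp u hu hucs hu0
  have hg2 : (∫ x, ‖R x + ((((n : ℝ) - 2) / (2 * ‖x‖) : ℝ) : ℂ) * ψ x‖ ^ 2)
      = (∫ x, ‖R x‖ ^ 2) + ∫ x, G x := by
    rw [← integral_add hintR2 hintG]
    apply integral_congr_ae
    filter_upwards with x
    exact hP x
  have hIG : ∫ x, G x = -(((n : ℝ) - 2) ^ 2 / 4) * ∫ x, C x := by
    rw [hGdef]
    rw [integral_add (hintB.const_mul _) (hintC.const_mul _), integral_const_mul,
      integral_const_mul, hIB]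
    ring
  have hg3 : ∫ x, ‖ψ x / (‖x‖ : ℂ)‖ ^ 2 = ∫ x, C x := by
    apply integral_congr_ae
    filter_upwards with x
    rw [hCdef, hudef]
    simp only [norm_div, Complex.norm_real, Real.norm_eq_abs, abs_of_nonneg (norm_nonneg x),
      div_pow]
  rw [hg2, hIG, hg3]
  ring
end

section
/- Let n ≥ 1 and let φ : ℝⁿ → ℂ be a compactly supported smooth function. Define Aφ(x) = −i x·∇φ(x) − i(n/2)φ(x) (the generator of dilations applied to φ) and Bφ(x) = −Δφ(x) (the free Hamiltonian applied to φ). Then 2‖∇φ‖² = 2(Bφ|φ) = −2 Im (Aφ|Bφ), and if moreover Aφ ≠ 0 and Bφ ≠ 0 then 2‖∇φ‖² = ‖Aφ‖‖Bφ‖ (2 − ‖ Aφ/‖Aφ‖ + i Bφ/‖Bφ‖ ‖²); in particular ‖∇φ‖² ≤ ‖Aφ‖‖Bφ‖ = ‖x·∇φ + (n/2)φ‖ ‖Δφ‖. -/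
open MeasureTheory Complex

noncomputable def auxD {n : ℕ} (φ : EuclideanSpace ℝ (Fin n) → ℂ) (j : Fin n) :
    EuclideanSpace ℝ (Fin n) → ℂ :=
  fun x => fderiv ℝ φ x (EuclideanSpace.single j 1)

section Aux
variable {n : ℕ} {φ f g ψ : EuclideanSpace ℝ (Fin n) → ℂ}
local notation "𝓔" => EuclideanSpace ℝ (Fin n)

lemma my_cont_fd (hf : ContDiff ℝ (⊤ : ℕ∞) f) (v : 𝓔) : Continuous fun x => fderiv ℝ f x v :=
  ((hf.fderiv_right (m := (⊤ : ℕ∞)) (by simp)).continuous).clm_apply continuous_const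

lemma my_smooth_fd (hf : ContDiff ℝ (⊤ : ℕ∞) f) (v : 𝓔) : ContDiff ℝ (⊤ : ℕ∞) fun x => fderiv ℝ f x v :=
  (hf.fderiv_right (m := (⊤ : ℕ∞)) (by simp)).clm_apply contDiff_const

lemma my_intg (h1 : Continuous f) (h2 : HasCompactSupport f) : Integrable f volume :=
  h1.integrable_of_hasCompactSupport h2

lemma my_ibp (hf : ContDiff ℝ (⊤ : ℕ∞) f) (hg : ContDiff ℝ (⊤ : ℕ∞) g)
    (hgs : HasCompactSupport g) (v : 𝓔) :
    ∫ x, f x * fderiv ℝ g x v = - ∫ x, fderiv ℝ f x v * g x := by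
  apply integral_mul_fderiv_eq_neg_fderiv_mul_of_integrable
  · exact my_intg ((my_cont_fd hf v).mul hg.continuous) hgs.mul_left
  · exact my_intg (hf.continuous.mul (my_cont_fd hg v)) (hgs.fderiv_apply ℝ v).mul_left
  · exact my_intg (hf.continuous.mul hg.continuous) hgs.mul_left
  · exact fun x _ => hf.differentiable (by simp) x
  · exact fun x _ => hg.differentiable (by simp) x

lemma my_symm (hφ : ContDiff ℝ (⊤ : ℕ∞) φ) (x v w : 𝓔) :
    fderiv ℝ (fun y => fderiv ℝ φ y v) x w = fderiv ℝ (fun y => fderiv ℝ φ y w) x v := by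
  have hsym := hφ.contDiffAt.isSymmSndFDerivAt (x := x) (by rw [minSmoothness_of_isRCLikeNormedField]; exact WithTop.coe_le_coe.mpr le_top)
  have hd : DifferentiableAt ℝ (fderiv ℝ φ) x :=
    ((hφ.fderiv_right (m := (⊤ : ℕ∞)) (by simp)).differentiable (by simp)).differentiableAt
  have h1 : ∀ u u' : 𝓔, fderiv ℝ (fun y => fderiv ℝ φ y u) x u'
      = fderiv ℝ (fderiv ℝ φ) x u' u := by
    intro u u'
    have h2 := ((ContinuousLinearMap.apply ℝ ℂ u).hasFDerivAt.comp x hd.hasFDerivAt).fderiv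
    rw [show (fun y => fderiv ℝ φ y u)
        = ((ContinuousLinearMap.apply ℝ ℂ u)) ∘ (fderiv ℝ φ) from rfl, h2]
    simp
  rw [h1 v w, h1 w v]
  exact hsym.eq w v

lemma my_coord_fd (j : Fin n) (x v : 𝓔) :
    fderiv ℝ (fun y : 𝓔 => ((y j : ℝ) : ℂ)) x v = (v j : ℂ) := by
  have h : (fun y : 𝓔 => ((y j : ℝ) : ℂ)) = Complex.ofRealCLM ∘ (EuclideanSpace.proj j) := rfl
  rw [h, fderiv_comp _ Complex.ofRealCLM.differentiableAt
    (EuclideanSpace.proj (𝕜 := ℝ) (ι := Fin n) j).differentiableAt,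
    ContinuousLinearMap.fderiv, ContinuousLinearMap.fderiv]; rfl

lemma my_coord_smooth (j : Fin n) : ContDiff ℝ (⊤ : ℕ∞) (fun y : 𝓔 => ((y j : ℝ) : ℂ)) :=
  Complex.ofRealCLM.contDiff.comp (EuclideanSpace.proj (𝕜 := ℝ) (ι := Fin n) j).contDiff

lemma my_conj_fd (x v : 𝓔) :
    fderiv ℝ (fun y => (starRingEnd ℂ) (f y)) x v = (starRingEnd ℂ) (fderiv ℝ f x v) := by
  have h : (fun y => (starRingEnd ℂ) (f y)) = fun y => star (f y) := rfl
  rw [h, fderiv_star]; rfl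

lemma my_conj_smooth (hf : ContDiff ℝ (⊤ : ℕ∞) f) :
    ContDiff ℝ (⊤ : ℕ∞) (fun y => (starRingEnd ℂ) (f y)) :=
  ((starL' ℝ : ℂ ≃L[ℝ] ℂ) : ℂ →L[ℝ] ℂ).contDiff.comp hf

lemma my_conj_supp (hf : HasCompactSupport f) :
    HasCompactSupport (fun y => (starRingEnd ℂ) (f y)) :=
  hf.comp_left (g := starRingEnd ℂ) (by simp)

lemma my_sum_supp {ι : Type*} (s : Finset ι) (F : ι → 𝓔 → ℂ)
    (h : ∀ i, HasCompactSupport (F i)) : HasCompactSupport (fun x => ∑ i ∈ s, F i x) := by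
  classical
  induction s using Finset.induction with
  | empty => simpa [HasCompactSupport, tsupport] using isCompact_empty
  | insert _ _ hx ih =>
      simp only [Finset.sum_insert hx]
      exact (h _).add ih

lemma int_mul_conj_self (ψ : 𝓔 → ℂ) :
    ∫ x, ψ x * (starRingEnd ℂ) (ψ x) = ((∫ x, ‖ψ x‖^2 : ℝ) : ℂ) := by
  simp_rw [Complex.mul_conj', ← Complex.ofReal_pow]
  exact integral_ofReal

lemma auxD_smooth (hφ : ContDiff ℝ (⊤ : ℕ∞) φ) (j : Fin n) : ContDiff ℝ (⊤ : ℕ∞) (auxD φ j) :=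
  my_smooth_fd hφ _

lemma auxD_supp (hs : HasCompactSupport φ) (j : Fin n) : HasCompactSupport (auxD φ j) :=
  hs.fderiv_apply ℝ _

lemma P1 (hφ : ContDiff ℝ (⊤ : ℕ∞) φ) (hs : HasCompactSupport φ) (j : Fin n) :
    ∫ x, fderiv ℝ (auxD φ j) x (EuclideanSpace.single j 1) * (starRingEnd ℂ) (φ x)
      = -((∫ x, ‖auxD φ j x‖^2 : ℝ) : ℂ) := by
  have h := my_ibp (my_conj_smooth hφ) (auxD_smooth hφ j) (auxD_supp hs j)
    (EuclideanSpace.single j 1)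
  calc ∫ x, fderiv ℝ (auxD φ j) x (EuclideanSpace.single j 1) * (starRingEnd ℂ) (φ x)
      = ∫ x, (starRingEnd ℂ) (φ x) * fderiv ℝ (auxD φ j) x (EuclideanSpace.single j 1) := by
        simp_rw [mul_comm]
    _ = - ∫ x, fderiv ℝ (fun y => (starRingEnd ℂ) (φ y)) x (EuclideanSpace.single j 1)
          * auxD φ j x := h
    _ = - ∫ x, auxD φ j x * (starRingEnd ℂ) (auxD φ j x) := by
        simp_rw [my_conj_fd, mul_comm]
        rfl
    _ = -((∫ x, ‖auxD φ j x‖^2 : ℝ) : ℂ) := by rw [int_mul_conj_self]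

lemma P2 (hφ : ContDiff ℝ (⊤ : ℕ∞) φ) (hs : HasCompactSupport φ) (k : Fin n) :
    ∫ x, φ x * (starRingEnd ℂ) (fderiv ℝ (auxD φ k) x (EuclideanSpace.single k 1))
      = -((∫ x, ‖auxD φ k x‖^2 : ℝ) : ℂ) := by
  have h := my_ibp hφ (my_conj_smooth (auxD_smooth hφ k)) (my_conj_supp (auxD_supp hs k))
    (EuclideanSpace.single k 1)
  calc ∫ x, φ x * (starRingEnd ℂ) (fderiv ℝ (auxD φ k) x (EuclideanSpace.single k 1))
      = ∫ x, φ x * fderiv ℝ (fun y => (starRingEnd ℂ) (auxD φ k y)) x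
          (EuclideanSpace.single k 1) := by simp_rw [my_conj_fd]
    _ = - ∫ x, fderiv ℝ φ x (EuclideanSpace.single k 1) * (starRingEnd ℂ) (auxD φ k x) := h
    _ = -((∫ x, ‖auxD φ k x‖^2 : ℝ) : ℂ) := by
        rw [show (fun x => fderiv ℝ φ x (EuclideanSpace.single k 1) * (starRingEnd ℂ) (auxD φ k x))
            = fun x => auxD φ k x * (starRingEnd ℂ) (auxD φ k x) from rfl, int_mul_conj_self]

lemma Kre (hφ : ContDiff ℝ (⊤ : ℕ∞) φ) (hs : HasCompactSupport φ) (j k : Fin n) :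
    (∫ x, ((x j : ℝ) : ℂ) * fderiv ℝ (auxD φ k) x (EuclideanSpace.single j 1)
        * (starRingEnd ℂ) (auxD φ k x)).re
      = -(∫ x, ‖auxD φ k x‖^2)/2 := by
  set ej := EuclideanSpace.single (𝕜 := ℝ) j (1:ℝ) with hej
  set K := ∫ x, ((x j : ℝ) : ℂ) * fderiv ℝ (auxD φ k) x ej * (starRingEnd ℂ) (auxD φ k x)
    with hK
  have hcontD : Continuous (auxD φ k) := (auxD_smooth hφ k).continuous
  have hcontD' : Continuous fun x => fderiv ℝ (auxD φ k) x ej :=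
    my_cont_fd (auxD_smooth hφ k) ej
  have hcoordc : Continuous fun x : 𝓔 => ((x j : ℝ) : ℂ) := (my_coord_smooth j).continuous
  have hconjc : Continuous fun x => (starRingEnd ℂ) (auxD φ k x) :=
    (my_conj_smooth (auxD_smooth hφ k)).continuous
  have hsuppC : HasCompactSupport fun x => (starRingEnd ℂ) (auxD φ k x) :=
    my_conj_supp (auxD_supp hs k)
  have hint1 : Integrable (fun x =>
      ((x j : ℝ) : ℂ) * fderiv ℝ (auxD φ k) x ej * (starRingEnd ℂ) (auxD φ k x)) volume :=
    my_intg ((hcoordc.mul hcontD').mul hconjc) hsuppC.mul_left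
  have hint2 : Integrable (fun x =>
      ((x j : ℝ) : ℂ) * ((starRingEnd ℂ) (fderiv ℝ (auxD φ k) x ej) * auxD φ k x)) volume := by
    refine my_intg (hcoordc.mul (((my_conj_smooth (my_smooth_fd (auxD_smooth hφ k) ej)).continuous).mul hcontD)) ?_
    exact ((auxD_supp hs k).mul_left).mul_left
  have hconjK : (starRingEnd ℂ) K = ∫ x, ((x j : ℝ) : ℂ)
      * ((starRingEnd ℂ) (fderiv ℝ (auxD φ k) x ej) * auxD φ k x) := by
    rw [hK, ← integral_conj]
    congr 1; funext x
    simp only [map_mul, Complex.conj_conj, Complex.conj_ofReal]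
    ring
  have hprod : ∀ x, fderiv ℝ (fun y => auxD φ k y * (starRingEnd ℂ) (auxD φ k y)) x ej
      = fderiv ℝ (auxD φ k) x ej * (starRingEnd ℂ) (auxD φ k x)
        + (starRingEnd ℂ) (fderiv ℝ (auxD φ k) x ej) * auxD φ k x := by
    intro x
    have hd1 : DifferentiableAt ℝ (auxD φ k) x :=
      ((auxD_smooth hφ k).differentiable (by simp)).differentiableAt
    have hd2 : DifferentiableAt ℝ (fun y => (starRingEnd ℂ) (auxD φ k y)) x :=
      ((my_conj_smooth (auxD_smooth hφ k)).differentiable (by simp)).differentiableAt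
    rw [fderiv_fun_mul hd1 hd2]
    simp only [ContinuousLinearMap.add_apply, ContinuousLinearMap.smul_apply, smul_eq_mul]
    rw [my_conj_fd]
    ring
  have hsum : K + (starRingEnd ℂ) K
      = ∫ x, ((x j : ℝ) : ℂ)
          * fderiv ℝ (fun y => auxD φ k y * (starRingEnd ℂ) (auxD φ k y)) x ej := by
    rw [hK, hconjK, ← integral_add hint1 hint2]
    congr 1; funext x
    rw [hprod]
    ring
  have hibp := my_ibp (f := fun y : 𝓔 => ((y j : ℝ) : ℂ))
    (g := fun y => auxD φ k y * (starRingEnd ℂ) (auxD φ k y))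
    (my_coord_smooth j)
    ((auxD_smooth hφ k).mul (my_conj_smooth (auxD_smooth hφ k)))
    hsuppC.mul_left ej
  have hcoordd : ∀ x : 𝓔, fderiv ℝ (fun y : 𝓔 => ((y j : ℝ) : ℂ)) x ej = 1 := by
    intro x
    rw [my_coord_fd]
    simp [hej, EuclideanSpace.single_apply]
  have hval : K + (starRingEnd ℂ) K = -((∫ x, ‖auxD φ k x‖^2 : ℝ) : ℂ) := by
    rw [hsum, hibp]
    rw [show (fun x => fderiv ℝ (fun y : 𝓔 => ((y j : ℝ) : ℂ)) x ej
        * (auxD φ k x * (starRingEnd ℂ) (auxD φ k x)))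
      = fun x => fderiv ℝ (fun y : 𝓔 => ((y j : ℝ) : ℂ)) x ej
        * (auxD φ k x * (starRingEnd ℂ) (auxD φ k x)) from rfl]
    simp_rw [hcoordd, one_mul]
    rw [int_mul_conj_self]
  have h2re : ((2 * K.re : ℝ) : ℂ) = -((∫ x, ‖auxD φ k x‖^2 : ℝ) : ℂ) := by
    rw [← Complex.add_conj]; exact hval
  have := Complex.ofReal_injective (by push_cast at h2re ⊢; exact h2re :
    ((2 * K.re : ℝ) : ℂ) = ((-(∫ x, ‖auxD φ k x‖^2) : ℝ) : ℂ))
  linarith [this]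

lemma P3 (hφ : ContDiff ℝ (⊤ : ℕ∞) φ) (hs : HasCompactSupport φ) (j k : Fin n) :
    (∫ x, ((x j : ℝ) : ℂ) * auxD φ j x
        * (starRingEnd ℂ) (fderiv ℝ (auxD φ k) x (EuclideanSpace.single k 1))).re
      = -(if j = k then (∫ x, ‖auxD φ j x‖^2) else 0) + (∫ x, ‖auxD φ k x‖^2)/2 := by
  have hfs : ContDiff ℝ (⊤ : ℕ∞) (fun y : 𝓔 => ((y j : ℝ) : ℂ) * auxD φ j y) :=
    (my_coord_smooth j).mul (auxD_smooth hφ j)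
  have h := my_ibp (f := fun y : 𝓔 => ((y j : ℝ) : ℂ) * auxD φ j y)
    (g := fun y => (starRingEnd ℂ) (auxD φ k y))
    hfs (my_conj_smooth (auxD_smooth hφ k)) (my_conj_supp (auxD_supp hs k))
    (EuclideanSpace.single k 1)
  have step1 : ∫ x, ((x j : ℝ) : ℂ) * auxD φ j x
        * (starRingEnd ℂ) (fderiv ℝ (auxD φ k) x (EuclideanSpace.single k 1))
      = - ∫ x, fderiv ℝ (fun y : 𝓔 => ((y j : ℝ) : ℂ) * auxD φ j y) x
          (EuclideanSpace.single k 1) * (starRingEnd ℂ) (auxD φ k x) := by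
    rw [← h]
    congr 1; funext x
    rw [my_conj_fd]
  have hprod : ∀ x : 𝓔, fderiv ℝ (fun y : 𝓔 => ((y j : ℝ) : ℂ) * auxD φ j y) x
        (EuclideanSpace.single k 1)
      = ((x j : ℝ) : ℂ) * fderiv ℝ (auxD φ k) x (EuclideanSpace.single j 1)
        + (if j = k then 1 else 0) * auxD φ j x := by
    intro x
    have hd1 : DifferentiableAt ℝ (fun y : 𝓔 => ((y j : ℝ) : ℂ)) x :=
      ((my_coord_smooth j).differentiable (by simp)).differentiableAt
    have hd2 : DifferentiableAt ℝ (auxD φ j) x :=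
      ((auxD_smooth hφ j).differentiable (by simp)).differentiableAt
    rw [fderiv_fun_mul hd1 hd2]
    simp only [ContinuousLinearMap.add_apply, ContinuousLinearMap.smul_apply, smul_eq_mul]
    rw [my_coord_fd]
    have hsymm : fderiv ℝ (auxD φ j) x (EuclideanSpace.single k 1)
        = fderiv ℝ (auxD φ k) x (EuclideanSpace.single j 1) :=
      my_symm hφ x (EuclideanSpace.single j 1) (EuclideanSpace.single k 1)
    rw [hsymm]
    rw [show ((EuclideanSpace.single k (1:ℝ)) j : ℂ) = (if j = k then 1 else 0) by
      rw [EuclideanSpace.single_apply]; split_ifs <;> simp]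
    ring
  have hintK : Integrable (fun x =>
      ((x j : ℝ) : ℂ) * fderiv ℝ (auxD φ k) x (EuclideanSpace.single j 1)
        * (starRingEnd ℂ) (auxD φ k x)) volume :=
    my_intg (((my_coord_smooth j).continuous.mul
        (my_cont_fd (auxD_smooth hφ k) _)).mul
        (my_conj_smooth (auxD_smooth hφ k)).continuous)
      (my_conj_supp (auxD_supp hs k)).mul_left
  have hintM : Integrable (fun x =>
      (if j = k then (1:ℂ) else 0) * auxD φ j x * (starRingEnd ℂ) (auxD φ k x)) volume :=
    my_intg ((continuous_const.mul (auxD_smooth hφ j).continuous).mul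
        (my_conj_smooth (auxD_smooth hφ k)).continuous)
      (my_conj_supp (auxD_supp hs k)).mul_left
  have step2 : ∫ x, fderiv ℝ (fun y : 𝓔 => ((y j : ℝ) : ℂ) * auxD φ j y) x
        (EuclideanSpace.single k 1) * (starRingEnd ℂ) (auxD φ k x)
      = (∫ x, ((x j : ℝ) : ℂ) * fderiv ℝ (auxD φ k) x (EuclideanSpace.single j 1)
          * (starRingEnd ℂ) (auxD φ k x))
        + (if j = k then (1:ℂ) else 0) * ∫ x, auxD φ j x * (starRingEnd ℂ) (auxD φ k x) := by
    rw [← integral_const_mul, ← integral_add hintK (by simpa [mul_assoc] using hintM)]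
    congr 1; funext x
    rw [hprod]
    ring
  rw [step1, step2]
  by_cases hjk : j = k
  · subst hjk
    simp only [eq_self_iff_true, if_true, one_mul]
    rw [int_mul_conj_self, Complex.neg_re, Complex.add_re, Complex.ofReal_re, Kre hφ hs j j]
    ring
  · simp only [if_neg hjk, zero_mul, mul_zero, add_zero]
    rw [Complex.neg_re]
    rw [Kre hφ hs j k]
    ring
lemma norm_expand (α β : ℝ) (u v : ℂ) :
    ‖(α:ℂ)*u + Complex.I*((β:ℂ)*v)‖^2
      = α^2*‖u‖^2 + β^2*‖v‖^2 + 2*α*β*(u * (starRingEnd ℂ) v).im := by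
  have h : ∀ z : ℂ, ‖z‖^2 = z.re^2 + z.im^2 := fun z => by
    rw [← Complex.normSq_eq_norm_sq, Complex.normSq_apply]; ring
  rw [h, h, h]
  simp only [Complex.add_re, Complex.add_im, Complex.mul_re, Complex.mul_im,
    Complex.I_re, Complex.I_im, Complex.ofReal_re, Complex.ofReal_im,
    Complex.conj_re, Complex.conj_im]
  ring

lemma pos_of_ne (f : 𝓔 → ℂ) (hf : Continuous f) (hsupp : HasCompactSupport f)
    (hne : f ≠ 0) : 0 < ∫ x, ‖f x‖^2 := by
  obtain ⟨x₀, hx₀⟩ : ∃ x, f x ≠ 0 := by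
    by_contra h; push_neg at h; exact hne (funext h)
  have hsupp2 : HasCompactSupport (fun x => ‖f x‖^2) :=
    hsupp.comp_left (g := fun z : ℂ => ‖z‖^2) (by simp)
  rw [integral_pos_iff_support_of_nonneg (fun x => sq_nonneg _)
    ((hf.norm.pow 2).integrable_of_hasCompactSupport hsupp2)]
  have hopen : IsOpen {x : 𝓔 | f x ≠ 0} := (isOpen_compl_singleton).preimage hf
  have hsub : {x : 𝓔 | f x ≠ 0} ⊆ Function.support fun x => ‖f x‖^2 := by
    intro x hx
    simp only [Function.mem_support]
    have h0 : (0:ℝ) < ‖f x‖ := norm_pos_iff.mpr hx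
    exact ne_of_gt (by positivity)
  exact lt_of_lt_of_le (hopen.measure_pos volume ⟨x₀, hx₀⟩) (measure_mono hsub)

end Aux
/-- Uncertainty relation between the generator of dilations
`Aφ = −i x·∇φ − i(n/2)φ` and the free Hamiltonian `Bφ = −Δφ` for a compactly
supported smooth `φ`.  Here `nA, nB` are the `L²` norms of `Aφ`, `Bφ`, and the
scalar product `(f|g) = ∫ f conj g` is linear in the first variable. -/
theorem stmt_18 (n : ℕ) (hn : 1 ≤ n)
    (φ : EuclideanSpace ℝ (Fin n) → ℂ)
    (hφ : ContDiff ℝ (⊤ : ℕ∞) φ) (hsupp : HasCompactSupport φ)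
    (A B : EuclideanSpace ℝ (Fin n) → ℂ)
    (hA : A = fun x =>
      -Complex.I * (∑ j, (x j : ℂ) * fderiv ℝ φ x (EuclideanSpace.single j 1)) -
        Complex.I * (((n : ℝ) / 2 : ℝ) : ℂ) * φ x)
    (hB : B = fun x =>
      -(∑ j, fderiv ℝ (fun y => fderiv ℝ φ y (EuclideanSpace.single j 1)) x
          (EuclideanSpace.single j 1)))
    (nA nB : ℝ)
    (hnA : nA = Real.sqrt (∫ x, ‖A x‖ ^ 2))
    (hnB : nB = Real.sqrt (∫ x, ‖B x‖ ^ 2)) :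
    ((2 * ∑ j, ∫ x, ‖fderiv ℝ φ x (EuclideanSpace.single j 1)‖ ^ 2 : ℝ) : ℂ)
        = 2 * ∫ x, B x * (starRingEnd ℂ) (φ x) ∧
    2 * ∑ j, ∫ x, ‖fderiv ℝ φ x (EuclideanSpace.single j 1)‖ ^ 2
        = -2 * (∫ x, A x * (starRingEnd ℂ) (B x)).im ∧
    (A ≠ 0 → B ≠ 0 →
      (2 * ∑ j, ∫ x, ‖fderiv ℝ φ x (EuclideanSpace.single j 1)‖ ^ 2
          = nA * nB *
            (2 - ∫ x, ‖(nA : ℂ)⁻¹ * A x + Complex.I * ((nB : ℂ)⁻¹ * B x)‖ ^ 2)) ∧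
      (∑ j, ∫ x, ‖fderiv ℝ φ x (EuclideanSpace.single j 1)‖ ^ 2 ≤ nA * nB) ∧
      nA * nB
        = Real.sqrt (∫ x,
            ‖(∑ j, (x j : ℂ) * fderiv ℝ φ x (EuclideanSpace.single j 1)) +
              (((n : ℝ) / 2 : ℝ) : ℂ) * φ x‖ ^ 2) *
          Real.sqrt (∫ x,
            ‖∑ j, fderiv ℝ (fun y => fderiv ℝ φ y (EuclideanSpace.single j 1)) x
                (EuclideanSpace.single j 1)‖ ^ 2)) := by
  classical
  have hD : ∀ (j : Fin n) (x : EuclideanSpace ℝ (Fin n)),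
      ((x j : ℝ) : ℂ) * fderiv ℝ φ x (EuclideanSpace.single j 1)
        = ((x j : ℝ) : ℂ) * auxD φ j x := fun _ _ => rfl
  have hD1 : ∀ (j : Fin n) (x : EuclideanSpace ℝ (Fin n)),
      fderiv ℝ φ x (EuclideanSpace.single j 1) = auxD φ j x := fun _ _ => rfl
  simp only [hD1] at hA hB ⊢
  -- continuity and support package
  have hScont : Continuous fun x : EuclideanSpace ℝ (Fin n) =>
      ∑ j, ((x j : ℝ) : ℂ) * auxD φ j x :=
    continuous_finset_sum _ fun j _ =>
      ((my_coord_smooth j).continuous).mul (auxD_smooth hφ j).continuous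
  have hSsupp : HasCompactSupport fun x : EuclideanSpace ℝ (Fin n) =>
      ∑ j, ((x j : ℝ) : ℂ) * auxD φ j x :=
    my_sum_supp Finset.univ _ fun j => (auxD_supp hsupp j).mul_left
  have hΔcont : Continuous fun x : EuclideanSpace ℝ (Fin n) =>
      ∑ k, fderiv ℝ (auxD φ k) x (EuclideanSpace.single k 1) :=
    continuous_finset_sum _ fun k _ => my_cont_fd (auxD_smooth hφ k) _
  have hΔsupp : HasCompactSupport fun x : EuclideanSpace ℝ (Fin n) =>
      ∑ k, fderiv ℝ (auxD φ k) x (EuclideanSpace.single k 1) :=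
    my_sum_supp Finset.univ _ fun k => (auxD_supp hsupp k).fderiv_apply ℝ _
  have hAcont : Continuous A := by
    rw [hA]
    exact (continuous_const.mul hScont).sub (continuous_const.mul hφ.continuous)
  have hAsupp : HasCompactSupport A := by
    rw [hA]
    have h1 : HasCompactSupport (fun x : EuclideanSpace ℝ (Fin n) =>
        -Complex.I * ∑ j, ((x j : ℝ) : ℂ) * auxD φ j x) := hSsupp.mul_left
    have h2 : HasCompactSupport (fun x : EuclideanSpace ℝ (Fin n) =>
        Complex.I * (((n : ℝ) / 2 : ℝ) : ℂ) * φ x) := hsupp.mul_left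
    have heq : (fun x : EuclideanSpace ℝ (Fin n) =>
        -Complex.I * (∑ j, ((x j : ℝ) : ℂ) * auxD φ j x)
          - Complex.I * (((n : ℝ) / 2 : ℝ) : ℂ) * φ x)
        = fun x => (-Complex.I * ∑ j, ((x j : ℝ) : ℂ) * auxD φ j x)
          + (-(Complex.I * (((n : ℝ) / 2 : ℝ) : ℂ) * φ x)) := by
      funext x; ring
    rw [heq]
    exact h1.add (h2.comp_left (g := Neg.neg) neg_zero)
  have hBcont : Continuous B := by
    rw [hB]; exact hΔcont.neg
  have hBsupp : HasCompactSupport B := by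
    rw [hB]; exact hΔsupp.comp_left (g := Neg.neg) neg_zero
  have hABint : Integrable (fun x => A x * (starRingEnd ℂ) (B x)) volume :=
    my_intg (hAcont.mul (Complex.continuous_conj.comp hBcont))
      (my_conj_supp hBsupp).mul_left
  -- Part 1
  have hint_Bφ : ∀ j : Fin n, Integrable (fun x =>
      fderiv ℝ (auxD φ j) x (EuclideanSpace.single j 1) * (starRingEnd ℂ) (φ x)) volume :=
    fun j => my_intg ((my_cont_fd (auxD_smooth hφ j) _).mul
      (Complex.continuous_conj.comp hφ.continuous)) (my_conj_supp hsupp).mul_left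
  have hBφ : ∫ x, B x * (starRingEnd ℂ) (φ x)
      = ((∑ j, ∫ x, ‖auxD φ j x‖^2 : ℝ) : ℂ) := by
    rw [hB]
    calc ∫ x, (-(∑ j, fderiv ℝ (auxD φ j) x (EuclideanSpace.single j 1)))
            * (starRingEnd ℂ) (φ x)
        = ∫ x, -(∑ j, fderiv ℝ (auxD φ j) x (EuclideanSpace.single j 1)
            * (starRingEnd ℂ) (φ x)) := by
          congr 1; funext x; rw [neg_mul, Finset.sum_mul]
      _ = -∑ j, ∫ x, fderiv ℝ (auxD φ j) x (EuclideanSpace.single j 1)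
            * (starRingEnd ℂ) (φ x) := by
          rw [integral_neg, integral_finset_sum _ (fun j _ => hint_Bφ j)]
      _ = -∑ j, -((∫ x, ‖auxD φ j x‖^2 : ℝ) : ℂ) :=
          congrArg Neg.neg (Finset.sum_congr rfl fun j _ => P1 hφ hsupp j)
      _ = ((∑ j, ∫ x, ‖auxD φ j x‖^2 : ℝ) : ℂ) := by
          push_cast
          rw [Finset.sum_neg_distrib, neg_neg]
  have hφΔint : ∀ k : Fin n, Integrable (fun x =>
      φ x * (starRingEnd ℂ) (fderiv ℝ (auxD φ k) x (EuclideanSpace.single k 1))) volume :=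
    fun k => my_intg (hφ.continuous.mul (Complex.continuous_conj.comp
      (my_cont_fd (auxD_smooth hφ k) _)))
      (my_conj_supp ((auxD_supp hsupp k).fderiv_apply ℝ _)).mul_left
  have hφΔ : ∫ x, φ x * (starRingEnd ℂ)
      (∑ k, fderiv ℝ (auxD φ k) x (EuclideanSpace.single k 1))
      = -((∑ j, ∫ x, ‖auxD φ j x‖^2 : ℝ) : ℂ) := by
    have e1 : ∀ x : EuclideanSpace ℝ (Fin n), φ x * (starRingEnd ℂ)
        (∑ k, fderiv ℝ (auxD φ k) x (EuclideanSpace.single k 1))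
        = ∑ k, φ x * (starRingEnd ℂ)
          (fderiv ℝ (auxD φ k) x (EuclideanSpace.single k 1)) := by
      intro x; rw [map_sum, Finset.mul_sum]
    simp_rw [e1]
    rw [integral_finset_sum _ (fun k _ => hφΔint k),
      Finset.sum_congr rfl (fun k _ => P2 hφ hsupp k)]
    push_cast
    rw [Finset.sum_neg_distrib]
  have hJint : ∀ j k : Fin n, Integrable (fun x =>
      ((x j : ℝ) : ℂ) * auxD φ j x * (starRingEnd ℂ)
        (fderiv ℝ (auxD φ k) x (EuclideanSpace.single k 1))) volume :=
    fun j k => my_intg (((my_coord_smooth j).continuous.mul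
        (auxD_smooth hφ j).continuous).mul
      (Complex.continuous_conj.comp (my_cont_fd (auxD_smooth hφ k) _)))
      (my_conj_supp ((auxD_supp hsupp k).fderiv_apply ℝ _)).mul_left
  have hSΔ : (∫ x, (∑ j, ((x j : ℝ) : ℂ) * auxD φ j x) * (starRingEnd ℂ)
      (∑ k, fderiv ℝ (auxD φ k) x (EuclideanSpace.single k 1))).re
      = -(∑ j, ∫ x, ‖auxD φ j x‖^2)
        + (n : ℝ) * (∑ j, ∫ x, ‖auxD φ j x‖^2) / 2 := by
    have e1 : ∀ x : EuclideanSpace ℝ (Fin n),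
        (∑ j, ((x j : ℝ) : ℂ) * auxD φ j x) * (starRingEnd ℂ)
          (∑ k, fderiv ℝ (auxD φ k) x (EuclideanSpace.single k 1))
        = ∑ j, ∑ k, ((x j : ℝ) : ℂ) * auxD φ j x * (starRingEnd ℂ)
          (fderiv ℝ (auxD φ k) x (EuclideanSpace.single k 1)) := by
      intro x; rw [map_sum, Finset.sum_mul_sum]
    simp_rw [e1]
    rw [integral_finset_sum _ (fun j _ => integrable_finset_sum _ (fun k _ => hJint j k)),
      Finset.sum_congr rfl (fun j _ => integral_finset_sum _ (fun k _ => hJint j k))]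
    rw [Complex.re_sum]
    rw [Finset.sum_congr rfl (fun j _ => Complex.re_sum _ _)]
    rw [Finset.sum_congr rfl (fun j _ =>
      Finset.sum_congr rfl (fun k _ => P3 hφ hsupp j k))]
    simp only [Finset.sum_add_distrib, Finset.sum_neg_distrib, Finset.sum_ite_eq,
      Finset.mem_univ, if_true, ← Finset.sum_div, Finset.sum_const, Finset.card_univ,
      Fintype.card_fin, nsmul_eq_mul]
    try ring
  have hpt : ∀ x, A x * (starRingEnd ℂ) (B x)
      = Complex.I * ((∑ j, ((x j : ℝ) : ℂ) * auxD φ j x) * (starRingEnd ℂ)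
          (∑ k, fderiv ℝ (auxD φ k) x (EuclideanSpace.single k 1)))
        + Complex.I * (((n : ℝ)/2 : ℝ) : ℂ) * (φ x * (starRingEnd ℂ)
          (∑ k, fderiv ℝ (auxD φ k) x (EuclideanSpace.single k 1))) := by
    intro x
    simp only [hA, hB, map_neg]
    ring
  have hint1 : Integrable (fun x =>
      Complex.I * ((∑ j, ((x j : ℝ) : ℂ) * auxD φ j x) * (starRingEnd ℂ)
        (∑ k, fderiv ℝ (auxD φ k) x (EuclideanSpace.single k 1)))) volume :=
    my_intg (continuous_const.mul (hScont.mul (Complex.continuous_conj.comp hΔcont)))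
      ((my_conj_supp hΔsupp).mul_left).mul_left
  have hint2 : Integrable (fun x =>
      Complex.I * (((n : ℝ)/2 : ℝ) : ℂ) * (φ x * (starRingEnd ℂ)
        (∑ k, fderiv ℝ (auxD φ k) x (EuclideanSpace.single k 1)))) volume :=
    my_intg (continuous_const.mul (hφ.continuous.mul
      (Complex.continuous_conj.comp hΔcont)))
      ((my_conj_supp hΔsupp).mul_left).mul_left
  have hTim : (∫ x, A x * (starRingEnd ℂ) (B x)).im
      = -(∑ j, ∫ x, ‖auxD φ j x‖^2) := by
    simp_rw [hpt]
    rw [integral_add hint1 hint2, integral_const_mul, integral_const_mul, hφΔ]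
    simp only [Complex.add_im, Complex.mul_im, Complex.mul_re, Complex.I_re,
      Complex.I_im, Complex.ofReal_re, Complex.ofReal_im, Complex.neg_re,
      Complex.neg_im]
    rw [hSΔ]
    ring
  refine ⟨by rw [hBφ]; push_cast; ring, by rw [hTim]; ring, ?_⟩
  · -- Part 3
    intro hAne hBne
    have hA2supp : HasCompactSupport (fun x => ‖A x‖^2) :=
      hAsupp.comp_left (g := fun z : ℂ => ‖z‖^2) (by simp)
    have hB2supp : HasCompactSupport (fun x => ‖B x‖^2) :=
      hBsupp.comp_left (g := fun z : ℂ => ‖z‖^2) (by simp)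
    have hA2int : Integrable (fun x => ‖A x‖^2) volume :=
      (hAcont.norm.pow 2).integrable_of_hasCompactSupport hA2supp
    have hB2int : Integrable (fun x => ‖B x‖^2) volume :=
      (hBcont.norm.pow 2).integrable_of_hasCompactSupport hB2supp
    have hApos : 0 < ∫ x, ‖A x‖^2 := pos_of_ne A hAcont hAsupp hAne
    have hBpos : 0 < ∫ x, ‖B x‖^2 := pos_of_ne B hBcont hBsupp hBne
    have hnApos : 0 < nA := by rw [hnA]; exact Real.sqrt_pos.mpr hApos
    have hnBpos : 0 < nB := by rw [hnB]; exact Real.sqrt_pos.mpr hBpos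
    have hnA2 : nA^2 = ∫ x, ‖A x‖^2 := by rw [hnA]; exact Real.sq_sqrt hApos.le
    have hnB2 : nB^2 = ∫ x, ‖B x‖^2 := by rw [hnB]; exact Real.sq_sqrt hBpos.le
    have hImint : ∫ x, (A x * (starRingEnd ℂ) (B x)).im
        = -(∑ j, ∫ x, ‖auxD φ j x‖^2) := by
      rw [show ∫ x, (A x * (starRingEnd ℂ) (B x)).im
          = (∫ x, A x * (starRingEnd ℂ) (B x)).im from integral_im hABint]
      exact hTim
    have hexp : ∫ x, ‖(nA : ℂ)⁻¹ * A x + Complex.I * ((nB : ℂ)⁻¹ * B x)‖^2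
        = nA⁻¹^2 * (∫ x, ‖A x‖^2) + nB⁻¹^2 * (∫ x, ‖B x‖^2)
          + 2*nA⁻¹*nB⁻¹*(∫ x, (A x * (starRingEnd ℂ) (B x)).im) := by
      have hpt2 : ∀ x, ‖(nA : ℂ)⁻¹ * A x + Complex.I * ((nB : ℂ)⁻¹ * B x)‖^2
          = nA⁻¹^2*‖A x‖^2 + nB⁻¹^2*‖B x‖^2
            + 2*nA⁻¹*nB⁻¹*(A x * (starRingEnd ℂ) (B x)).im := by
        intro x
        have h := norm_expand (nA⁻¹) (nB⁻¹) (A x) (B x)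
        push_cast at h
        exact h
      simp_rw [hpt2]
      have i1 : Integrable (fun x => nA⁻¹^2*‖A x‖^2 + nB⁻¹^2*‖B x‖^2) volume :=
        (hA2int.const_mul _).add (hB2int.const_mul _)
      have i2 : Integrable (fun x =>
          2*nA⁻¹*nB⁻¹*(A x * (starRingEnd ℂ) (B x)).im) volume :=
        (hABint.im).const_mul _
      have i3 : Integrable (fun x => nA⁻¹^2*‖A x‖^2) volume := hA2int.const_mul _
      have i4 : Integrable (fun x => nB⁻¹^2*‖B x‖^2) volume := hB2int.const_mul _
      rw [integral_add i1 i2, integral_add i3 i4,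
        integral_const_mul, integral_const_mul, integral_const_mul]
    have key : 2 * ∑ j, ∫ x, ‖auxD φ j x‖^2
        = nA * nB * (2 - ∫ x, ‖(nA : ℂ)⁻¹ * A x + Complex.I * ((nB : ℂ)⁻¹ * B x)‖^2) := by
      rw [hexp, hImint, ← hnA2, ← hnB2]
      field_simp
      ring
    refine ⟨key, ?_, ?_⟩
    · have hnn : 0 ≤ ∫ x, ‖(nA : ℂ)⁻¹ * A x + Complex.I * ((nB : ℂ)⁻¹ * B x)‖^2 :=
        integral_nonneg fun x => sq_nonneg _
      have h2 : 2 * ∑ j, ∫ x, ‖auxD φ j x‖^2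
          = 2 * (nA * nB) - (nA * nB) * ∫ x, ‖(nA : ℂ)⁻¹ * A x
            + Complex.I * ((nB : ℂ)⁻¹ * B x)‖^2 := by rw [key]; ring
      have h3 : 0 ≤ (nA * nB) * ∫ x, ‖(nA : ℂ)⁻¹ * A x
          + Complex.I * ((nB : ℂ)⁻¹ * B x)‖^2 :=
        mul_nonneg (mul_nonneg hnApos.le hnBpos.le) hnn
      linarith
    · rw [hnA, hnB]
      have hAeq : ∫ x, ‖A x‖^2 = ∫ x, ‖(∑ j, ((x j : ℝ) : ℂ) * auxD φ j x)
          + (((n : ℝ)/2 : ℝ) : ℂ) * φ x‖^2 := by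
        congr 1; funext x
        simp only [hA]
        rw [show -Complex.I * (∑ j, ((x j : ℝ) : ℂ) * auxD φ j x)
            - Complex.I * (((n : ℝ)/2 : ℝ) : ℂ) * φ x
            = (-Complex.I) * ((∑ j, ((x j : ℝ) : ℂ) * auxD φ j x)
              + (((n : ℝ)/2 : ℝ) : ℂ) * φ x) from by ring]
        rw [norm_mul, norm_neg, Complex.norm_I, one_mul]
      have hBeq : ∫ x, ‖B x‖^2 = ∫ x, ‖∑ k, fderiv ℝ (auxD φ k) x
          (EuclideanSpace.single k 1)‖^2 := by
        congr 1; funext x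
        rw [hB, norm_neg]
      rw [hAeq, hBeq]
end
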